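/- arXiv:0904.1907 — 6 statements merged into one kernel-verified Lean document; each statement's English description precedes it below -/
import Mathlib

section
/- If X is uniformly distributed over the codeword set of an (n,k) MDS code over GF(q), then the average entropy function h = (h_1,...,h_n) of X, where h_m is the average of the joint entropies H(X_α) over all subsets α of {1,...,n} of size m, satisfies h_m = min(m,k)·log q for all m. -/
/-!
Fix `α` with `|α| = m`. Counting extensions one coordinate at a time, the MDS property shows
that every nonempty fibre of the projection `C → F^α` has exactly `q ^ (k - min m k)`
codewords. For the uniform distribution on `C`, a projection all of whose nonempty fibres have
the same size `M` has entropy `log (|C| / M)`, here `log (q ^ min m k)`. This value does not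
depend on `α`, so it is also the average over `α`.
-/

open Finset Real

/-- Joint Shannon entropy (natural log) of the coordinates in `α` of the random
vector `X` defined on a finite sample space `Ω` with probability mass `p`. -/
noncomputable def jointEntropy {Ω E : Type*} [Fintype Ω] [Fintype E] [DecidableEq E] {n : ℕ}
    (p : Ω → ℝ) (X : Fin n → Ω → E) (α : Finset (Fin n)) : ℝ :=
  ∑ y : α → E, Real.negMulLog (∑ ω ∈ univ.filter (fun ω => ∀ i : α, X i ω = y i), p ω)

section Entropy

variable {Ω E : Type*} [Fintype E] [DecidableEq E] {n : ℕ}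

noncomputable def uniformMass [DecidableEq Ω] (C : Finset Ω) (ω : Ω) : ℝ :=
  if ω ∈ C then ((#C : ℕ) : ℝ)⁻¹ else 0

theorem jointEntropy_uniformMass [Fintype Ω] [DecidableEq Ω] (C : Finset Ω)
    (X : Fin n → Ω → E) (α : Finset (Fin n)) :
    jointEntropy (uniformMass C) X α =
      ∑ y : α → E, negMulLog (#(C.filter fun ω => ∀ i : α, X i ω = y i) / #C) := by
  refine sum_congr rfl fun y _ => ?_
  simp only [uniformMass]
  rw [← sum_filter, filter_filter, sum_const, nsmul_eq_mul, div_eq_mul_inv]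
  congr 4
  ext ω
  simp [and_comm]

theorem sum_card_filter_forall_eq (C : Finset Ω) (X : Fin n → Ω → E) (α : Finset (Fin n)) :
    ∑ y : α → E, #(C.filter fun ω => ∀ i : α, X i ω = y i) = #C := by
  have h := card_eq_sum_card_fiberwise (f := fun ω (i : α) => X i ω) (s := C) (t := univ)
    fun _ _ => mem_univ _
  simpa only [funext_iff] using h.symm

theorem negMulLog_div_of_eq_zero_or_eq {c M : ℝ} (N : ℝ) (hc : c = 0 ∨ c = M) :
    negMulLog (c / N) = c / N * log (N / M) := by
  rcases hc with rfl | rfl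
  · simp
  · rw [negMulLog, ← inv_div, log_inv]
    ring

theorem jointEntropy_uniformMass_of_card_fiber [Fintype Ω] [DecidableEq Ω] (C : Finset Ω)
    (X : Fin n → Ω → E) (α : Finset (Fin n)) (M : ℕ)
    (hfiber : ∀ y : α → E, #(C.filter fun ω => ∀ i : α, X i ω = y i) = 0 ∨
      #(C.filter fun ω => ∀ i : α, X i ω = y i) = M) :
    jointEntropy (uniformMass C) X α = log (#C / M) := by
  rw [jointEntropy_uniformMass]
  rcases (#C).eq_zero_or_pos with hC | hC
  · simp [hC]
  have hterm := fun y => negMulLog_div_of_eq_zero_or_eq (#C : ℝ)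
    ((hfiber y).imp Nat.cast_eq_zero.2 (congrArg Nat.cast))
  rw [sum_congr rfl fun y _ => hterm y, ← sum_mul, ← sum_div,
    ← Nat.cast_sum, sum_card_filter_forall_eq, div_self (by positivity), one_mul]

end Entropy

section MDS

variable {ι F : Type*}

def IsMDS (C : Finset (ι → F)) (k : ℕ) : Prop :=
  ∀ β : Finset ι, β.card = k → ∀ y : β → F, ∃! c, c ∈ C ∧ ∀ i : β, c i = y i

def filterEqOn [DecidableEq F] (C : Finset (ι → F)) (α : Finset ι) (y : ι → F) :
    Finset (ι → F) :=
  C.filter fun c => ∀ i ∈ α, c i = y i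

theorem mem_filterEqOn [DecidableEq F] {C : Finset (ι → F)} {α : Finset ι} {y c : ι → F} :
    c ∈ filterEqOn C α y ↔ c ∈ C ∧ ∀ i ∈ α, c i = y i :=
  mem_filter

theorem filter_filterEqOn_apply_eq [DecidableEq ι] [DecidableEq F] (C : Finset (ι → F))
    {α : Finset ι} {j : ι} (hj : j ∉ α) (y : ι → F) (a : F) :
    (filterEqOn C α y).filter (fun c => c j = a) =
      filterEqOn C (insert j α) (Function.update y j a) := by
  rw [filterEqOn, filterEqOn, filter_filter]
  refine filter_congr fun c _ => ?_
  rw [forall_mem_insert, Function.update_self, and_comm]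
  refine and_congr_right' (forall₂_congr fun i hi => ?_)
  rw [Function.update_of_ne (ne_of_mem_of_not_mem hi hj)]

namespace IsMDS

variable {C : Finset (ι → F)} {k : ℕ}

theorem card_filterEqOn [Fintype ι] [DecidableEq ι] [Fintype F] [DecidableEq F]
    (hC : IsMDS C k) (hk : k ≤ Fintype.card ι) {α : Finset ι} (hα : #α ≤ k)
    (y : ι → F) : #(filterEqOn C α y) = Fintype.card F ^ (k - #α) := by
  obtain ⟨d, hd⟩ := Nat.exists_eq_add_of_le hα
  rw [hd, Nat.add_sub_cancel_left]
  clear hα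
  induction d generalizing α y with
  | zero =>
    obtain ⟨c, hc, huniq⟩ := hC α hd.symm fun i => y i
    rw [pow_zero, card_eq_one]
    refine ⟨c, eq_singleton_iff_unique_mem.2 ⟨?_, fun c' hc' => ?_⟩⟩
    · exact mem_filterEqOn.2 ⟨hc.1, fun i hi => hc.2 ⟨i, hi⟩⟩
    · obtain ⟨hc'C, hc'y⟩ := mem_filterEqOn.1 hc'
      exact huniq c' ⟨hc'C, fun i => hc'y i i.2⟩
  | succ d ih =>
    obtain ⟨j, hj⟩ : ∃ j, j ∉ α := by
      by_contra! h
      have := card_le_card (fun i _ => h i : (univ : Finset ι) ⊆ α)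
      rw [card_univ] at this
      omega
    rw [card_eq_sum_card_fiberwise (f := fun c => c j) (t := univ) fun _ _ => mem_univ _]
    have hfiber : ∀ a : F, #((filterEqOn C α y).filter (fun c => c j = a))
        = Fintype.card F ^ d := by
      intro a
      rw [filter_filterEqOn_apply_eq C hj]
      exact ih _ (by rw [card_insert_of_notMem hj]; omega)
    rw [sum_congr rfl fun a _ => hfiber a, sum_const, card_univ, smul_eq_mul, pow_succ']

theorem card_filterEqOn_le_one [DecidableEq F] (hC : IsMDS C k) {α : Finset ι}
    (hα : k ≤ #α) (y : ι → F) : #(filterEqOn C α y) ≤ 1 := by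
  obtain ⟨β, hβα, hβ⟩ := exists_subset_card_eq hα
  obtain ⟨c, -, huniq⟩ := hC β hβ fun i => y i
  refine card_le_one.2 fun c₁ h₁ c₂ h₂ => ?_
  have agree : ∀ c' ∈ filterEqOn C α y, c' = c := fun c' h =>
    huniq c' ⟨(mem_filterEqOn.1 h).1, fun i => (mem_filterEqOn.1 h).2 i (hβα i.2)⟩
  rw [agree c₁ h₁, agree c₂ h₂]

theorem card_fiber_eq_zero_or_eq_pow [Fintype ι] [DecidableEq ι] [Fintype F] [DecidableEq F]
    (hC : IsMDS C k) (hk : k ≤ Fintype.card ι) (α : Finset ι) (y : α → F) :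
    #(C.filter fun c => ∀ i : α, c i = y i) = 0 ∨
      #(C.filter fun c => ∀ i : α, c i = y i) = Fintype.card F ^ (k - min #α k) := by
  rcases eq_empty_or_nonempty (C.filter fun c => ∀ i : α, c i = y i) with
    hempty | ⟨c₀, hc₀⟩
  · exact Or.inl (card_eq_zero.2 hempty)
  right
  have hfiber : (C.filter fun c => ∀ i : α, c i = y i) = filterEqOn C α c₀ := by
    have hc₀y := (mem_filter.1 hc₀).2
    ext c
    rw [mem_filterEqOn, mem_filter]
    refine and_congr_right fun _ => ?_
    simp only [Subtype.forall]
    exact forall₂_congr fun i hi => by rw [hc₀y ⟨i, hi⟩]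
  rw [hfiber]
  rcases le_total #α k with hαk | hkα
  · rw [min_eq_left hαk]
    exact hC.card_filterEqOn hk hαk c₀
  · rw [min_eq_right hkα, Nat.sub_self, pow_zero]
    exact le_antisymm (hC.card_filterEqOn_le_one hkα c₀)
      (card_pos.2 ⟨c₀, mem_filterEqOn.2 ⟨(mem_filter.1 hc₀).1, fun _ _ => rfl⟩⟩)

end IsMDS

end MDS

theorem mds_average_entropy_general (n k q : ℕ) (hkn : k ≤ n)
    (F : Type) [Field F] [Fintype F] [DecidableEq F] (hF : Fintype.card F = q)
    (C : Finset (Fin n → F)) (hCcard : C.card = q ^ k)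
    (hMDS : ∀ β : Finset (Fin n), β.card = k → ∀ y : β → F,
      ∃! c, c ∈ C ∧ ∀ i : β, c i = y i)
    (m : ℕ) (hmn : m ≤ n) :
    ((n.choose m : ℝ))⁻¹ * ∑ α ∈ powersetCard m (univ : Finset (Fin n)),
        jointEntropy (fun c : Fin n → F => if c ∈ C then ((q : ℝ) ^ k)⁻¹ else 0)
          (fun i c => c i) α
      = (min m k : ℕ) * Real.log q := by
  have hq : 0 < q := hF ▸ Fintype.card_pos
  have hmass :
      (fun c : Fin n → F => if c ∈ C then ((q : ℝ) ^ k)⁻¹ else 0) = uniformMass C := by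
    funext c
    simp only [uniformMass, hCcard, Nat.cast_pow]
  have hlog :
    log (((q ^ k : ℕ) : ℝ) / ((q ^ (k - min m k) : ℕ) : ℝ)) = (min m k : ℕ) * log q := by
    rw [Nat.cast_pow, Nat.cast_pow, div_eq_mul_inv,
      ← pow_sub₀ (q : ℝ) (by positivity) (Nat.sub_le _ _),
      Nat.sub_sub_self (min_le_right m k), log_pow]
  have hentropy : ∀ α ∈ powersetCard m (univ : Finset (Fin n)),
      jointEntropy (uniformMass C) (fun i c => c i) α = (min m k : ℕ) * log q := by
    intro α hα
    have hk : k ≤ Fintype.card (Fin n) := by rwa [Fintype.card_fin]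
    rw [jointEntropy_uniformMass_of_card_fiber C _ α _
      (IsMDS.card_fiber_eq_zero_or_eq_pow hMDS hk α), (mem_powersetCard.1 hα).2, hCcard, hF,
      hlog]
  rw [hmass, sum_congr rfl hentropy, sum_const, card_powersetCard, card_univ, Fintype.card_fin,
    nsmul_eq_mul, ← mul_assoc, inv_mul_cancel₀ (by exact_mod_cast (Nat.choose_pos hmn).ne'),
    one_mul]

/-- If `X` is uniform on an `(n,k)` MDS code over `GF(q)`, then its average
entropy function satisfies `h_m = min(m,k) · log q` for all `m = 1,…,n`. -/
theorem mds_average_entropy (n k q : ℕ) (hk : 1 ≤ k) (hkn : k ≤ n)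
    (hq : IsPrimePow q)
    (F : Type) [Field F] [Fintype F] [DecidableEq F] (hF : Fintype.card F = q)
    (C : Finset (Fin n → F)) (hCcard : C.card = q ^ k)
    (hMDS : ∀ β : Finset (Fin n), β.card = k → ∀ y : β → F,
      ∃! c, c ∈ C ∧ ∀ i : β, c i = y i)
    (m : ℕ) (hm1 : 1 ≤ m) (hmn : m ≤ n) :
    ((n.choose m : ℝ))⁻¹ * ∑ α ∈ powersetCard m (univ : Finset (Fin n)),
        jointEntropy (fun c : Fin n → F => if c ∈ C then ((q : ℝ) ^ k)⁻¹ else 0)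
          (fun i c => c i) α
      = (min m k : ℕ) * Real.log q :=
  mds_average_entropy_general n k q hkn F hF C hCcard hMDS m hmn
end

section
/- For any discrete random vector X = (X_1,...,X_n), the average entropy function h = (h_1,...,h_n), with convention h_0 = 0 and h_{n+1} = h_n, satisfies the second-order difference inequalities h_{m-1} - 2h_m + h_{m+1} ≤ 0 for all m = 1,...,n; i.e., the sequence h_m is concave and nondecreasing. -/
/-!
The entropy `H_α` of the marginal on `α` of a law `Q` is monotone and submodular in `α`: a
marginal is a function of a larger one, and `H_{α∪β} + H_{α∩β} ≤ H_α + H_β` is Gibbs'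
inequality against the law under which the `α`- and `β`-marginals are independent given the
`α∩β`-marginal. Averaging `H_{A∪{i,j}} + H_A ≤ H_{A∪{i}} + H_{A∪{j}}` over all `#A = m - 1` and
distinct `i, j ∉ A` gives `h_{m+1} + h_{m-1} ≤ 2 h_m` for `m < n`, since `A ∪ {i}` and
`A ∪ {i, j}` are then uniformly distributed among the sets of their size. At `m = n` the claim
is `h_{n-1} ≤ h_n`, which is monotonicity.
-/

open Finset Real

theorem Real.negMulLog_sum_le {ι : Type*} (s : Finset ι) {f : ι → ℝ} (hf : ∀ i ∈ s, 0 ≤ f i) :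
    negMulLog (∑ i ∈ s, f i) ≤ ∑ i ∈ s, negMulLog (f i) := by
  have hterm : ∀ i ∈ s, f i * log (f i) ≤ f i * log (∑ j ∈ s, f j) := by
    intro i hi
    rcases (hf i hi).eq_or_lt with hzero | hpos
    · simp [← hzero]
    · exact mul_le_mul_of_nonneg_left (log_le_log hpos (single_le_sum hf hi)) hpos.le
  simp only [negMulLog_eq_neg, sum_neg_distrib, neg_le_neg_iff, sum_mul]
  exact sum_le_sum hterm

theorem Real.sum_mul_log_le_sum_mul_log {ι : Type*} (s : Finset ι) {c q : ι → ℝ}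
    (hc : ∀ i ∈ s, 0 ≤ c i) (hq : ∀ i ∈ s, 0 ≤ q i) (hcq : ∀ i ∈ s, 0 < c i → 0 < q i)
    (hsum : ∑ i ∈ s, q i ≤ ∑ i ∈ s, c i) :
    ∑ i ∈ s, c i * log (q i) ≤ ∑ i ∈ s, c i * log (c i) := by
  have hterm : ∀ i ∈ s, c i * log (q i) - c i * log (c i) ≤ q i - c i := by
    intro i hi
    rcases (hc i hi).eq_or_lt with hzero | hpos
    · simp [← hzero, hq i hi]
    · have hqpos := hcq i hi hpos
      calc c i * log (q i) - c i * log (c i) = c i * log (q i / c i) := by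
            rw [log_div hqpos.ne' hpos.ne']; ring
        _ ≤ c i * (q i / c i - 1) :=
            mul_le_mul_of_nonneg_left (log_le_sub_one_of_pos (div_pos hqpos hpos)) hpos.le
        _ = q i - c i := by field_simp
  have := sum_le_sum hterm
  rw [sum_sub_distrib, sum_sub_distrib] at this
  linarith

section Pushforward

variable {T S R : Type*} [Fintype T] [DecidableEq S] [DecidableEq R]

noncomputable def pushforward (u : T → S) (P : T → ℝ) (s : S) : ℝ :=
  ∑ t ∈ univ.filter (fun t => u t = s), P t

noncomputable def shannon (P : T → ℝ) : ℝ := ∑ t, negMulLog (P t)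

theorem sum_pushforward [Fintype S] (u : T → S) (P : T → ℝ) : ∑ s, pushforward u P s = ∑ t, P t :=
  sum_fiberwise univ u P

theorem pushforward_nonneg {P : T → ℝ} (hP : ∀ t, 0 ≤ P t) (u : T → S) (s : S) :
    0 ≤ pushforward u P s :=
  sum_nonneg fun t _ => hP t

theorem le_pushforward_apply {P : T → ℝ} (hP : ∀ t, 0 ≤ P t) (u : T → S) (t : T) :
    P t ≤ pushforward u P (u t) :=
  single_le_sum (fun t _ => hP t) (by simp)

theorem pushforward_comp [Fintype S] (v : S → R) (u : T → S) (P : T → ℝ) :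
    pushforward (v ∘ u) P = pushforward v (pushforward u P) := by
  ext r
  simp only [pushforward, sum_fiberwise_eq_sum_filter, Function.comp_apply, mem_filter, mem_univ,
    true_and]

theorem pushforward_congr {P : T → ℝ} {u u' : T → S} (h : ∀ t, P t ≠ 0 → u t = u' t) :
    pushforward u P = pushforward u' P := by
  ext s
  simp only [pushforward, sum_filter]
  refine sum_congr rfl fun t _ => ?_
  by_cases ht : P t = 0
  · simp [ht]
  · rw [h t ht]

theorem shannon_pushforward [Fintype S] (u : T → S) (P : T → ℝ) :
    shannon (pushforward u P) = -∑ t, P t * log (pushforward u P (u t)) := by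
  rw [← sum_fiberwise univ u]
  simp only [shannon, negMulLog_eq_neg, ← sum_neg_distrib]
  refine sum_congr rfl fun s _ => ?_
  rw [pushforward, sum_mul, ← sum_neg_distrib]
  refine sum_congr rfl fun t ht => ?_
  obtain rfl := (mem_filter.1 ht).2
  rfl

theorem shannon_pushforward_le [Fintype S] {P : T → ℝ} (hP : ∀ t, 0 ≤ P t) (u : T → S) :
    shannon (pushforward u P) ≤ shannon P :=
  calc shannon (pushforward u P)
      ≤ ∑ s, ∑ t ∈ univ.filter (fun t => u t = s), negMulLog (P t) :=
        sum_le_sum fun _ _ => negMulLog_sum_le _ fun t _ => hP t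
    _ = shannon P := sum_fiberwise univ u _

theorem pushforward_apply_of_injective {u : T → S} (hu : Function.Injective u) (P : T → ℝ)
    (t : T) : pushforward u P (u t) = P t := by
  rw [pushforward, sum_eq_single_of_mem t (by simp) fun x hx hxt =>
    absurd (hu (mem_filter.1 hx).2) hxt]

theorem pushforward_apply_of_notMem_range {s : S} (u : T → S) (P : T → ℝ)
    (hs : s ∉ Set.range u) : pushforward u P s = 0 :=
  sum_eq_zero fun t ht => absurd ⟨t, (mem_filter.1 ht).2⟩ hs

theorem shannon_pushforward_of_injective [Fintype S] {u : T → S} (hu : Function.Injective u)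
    (P : T → ℝ) : shannon (pushforward u P) = shannon P :=
  (Fintype.sum_of_injective u hu _ _
    (fun s hs => by rw [pushforward_apply_of_notMem_range u P hs, negMulLog_zero])
    (fun t => by rw [pushforward_apply_of_injective hu])).symm

end Pushforward

section Submodular

variable {A B C : Type*} [Fintype A] [Fintype B] [Fintype C] [DecidableEq A] [DecidableEq B]
  [DecidableEq C]

/-- `H(X, Y) + H(Z) ≤ H(X) + H(Y)` for a joint law `c` of `(X, Y)` under which `Z = u X = v Y`. -/
theorem shannon_add_shannon_common_le {c : A × B → ℝ} (hc : ∀ x, 0 ≤ c x) (u : A → C)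
    (v : B → C) (huv : ∀ x, c x ≠ 0 → u x.1 = v x.2) :
    shannon c + shannon (pushforward (u ∘ Prod.fst) c)
      ≤ shannon (pushforward Prod.fst c) + shannon (pushforward Prod.snd c) := by
  set PA := pushforward Prod.fst c
  set PB := pushforward Prod.snd c
  set PC := pushforward (u ∘ Prod.fst) c
  have hPC : PC = pushforward v PB := by
    rw [← pushforward_comp]
    exact pushforward_congr huv
  have hpos : ∀ x, 0 < c x → 0 < PA x.1 ∧ 0 < PB x.2 ∧ 0 < PC (u x.1) := fun x hx =>
    ⟨hx.trans_le (le_pushforward_apply hc _ x), hx.trans_le (le_pushforward_apply hc _ x),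
      hx.trans_le (le_pushforward_apply hc _ x)⟩
  -- Gibbs' inequality against the law under which `X` and `Y` are independent given `Z`
  let q : A × B → ℝ := fun x => if v x.2 = u x.1 then PA x.1 * PB x.2 / PC (u x.1) else 0
  have hq_nonneg : ∀ x, 0 ≤ q x := fun x => by
    have hA := pushforward_nonneg hc Prod.fst x.1
    have hB := pushforward_nonneg hc Prod.snd x.2
    have hC := pushforward_nonneg hc (u ∘ Prod.fst) (u x.1)
    simp only [q]
    split_ifs <;> positivity
  have hq_pos : ∀ x, 0 < c x → 0 < q x := fun x hx => by
    obtain ⟨hA, hB, hC⟩ := hpos x hx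
    simp only [q, if_pos (huv x hx.ne').symm]
    positivity
  have hq_sum : ∑ x, q x ≤ ∑ x, c x := by
    rw [Fintype.sum_prod_type, ← sum_pushforward Prod.fst c]
    refine sum_le_sum fun a _ => ?_
    calc ∑ b, q (a, b) = PA a / PC (u a) * PC (u a) := by
          simp only [q, hPC, pushforward, ← sum_filter, mul_sum]
          exact sum_congr rfl fun b _ => by ring
      _ ≤ PA a := by
          rcases eq_or_ne (PC (u a)) 0 with h | h
          · simp [h, PA, pushforward_nonneg hc]
          · rw [div_mul_cancel₀ _ h]
  have hlog : ∀ x, c x * log (q x)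
      = c x * log (PA x.1) + c x * log (PB x.2) - c x * log (PC (u x.1)) := fun x => by
    rcases (hc x).eq_or_lt with hzero | hx
    · simp [← hzero]
    obtain ⟨hA, hB, hC⟩ := hpos x hx
    simp only [q, if_pos (huv x hx.ne').symm]
    rw [log_div (by positivity) hC.ne', log_mul hA.ne' hB.ne']
    ring
  have gibbs := sum_mul_log_le_sum_mul_log univ (fun x _ => hc x) (fun x _ => hq_nonneg x)
    (fun x _ => hq_pos x) hq_sum
  simp only [hlog, sum_sub_distrib, sum_add_distrib] at gibbs
  simp only [PA, PB, PC, shannon_pushforward, Function.comp_apply]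
  simp only [shannon, negMulLog_eq_neg, sum_neg_distrib]
  linarith

end Submodular

section Marginal

variable {ι E : Type*} [Fintype ι] [DecidableEq ι] [Fintype E] [DecidableEq E]

noncomputable def marginalEntropy (Q : (ι → E) → ℝ) (s : Finset ι) : ℝ :=
  shannon (pushforward (s.restrict : (ι → E) → (s → E)) Q)

variable {Q : (ι → E) → ℝ}

theorem marginalEntropy_empty (hQ : ∑ x, Q x = 1) : marginalEntropy Q ∅ = 0 := by
  have hP : pushforward ((∅ : Finset ι).restrict : (ι → E) → _) Q = fun _ => 1 := by
    ext y
    simp [pushforward, Subsingleton.elim _ y, hQ]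
  simp [marginalEntropy, shannon, hP]

theorem marginalEntropy_mono (hQ : ∀ x, 0 ≤ Q x) {s t : Finset ι} (hst : s ⊆ t) :
    marginalEntropy Q s ≤ marginalEntropy Q t := by
  rw [marginalEntropy, ← restrict₂_comp_restrict hst, pushforward_comp]
  exact shannon_pushforward_le (pushforward_nonneg hQ _) _

theorem marginalEntropy_submodular (hQ : ∀ x, 0 ≤ Q x) (s t : Finset ι) :
    marginalEntropy Q (s ∪ t) + marginalEntropy Q (s ∩ t)
      ≤ marginalEntropy Q s + marginalEntropy Q t := by
  set P := pushforward ((s ∪ t).restrict : (ι → E) → _) Q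
  let φ (w : (s ∪ t : Finset ι) → E) : (s → E) × (t → E) :=
    (fun i => w ⟨i, mem_union_left t i.2⟩, fun i => w ⟨i, mem_union_right s i.2⟩)
  have hφ : Function.Injective φ := fun w w' h => funext fun i => by
    rcases mem_union.1 i.2 with hi | hi
    · exact congrFun (congrArg Prod.fst h) ⟨i, hi⟩
    · exact congrFun (congrArg Prod.snd h) ⟨i, hi⟩
  let ρs (a : s → E) (i : ↥(s ∩ t)) : E := a ⟨i, (mem_inter.1 i.2).1⟩
  let ρt (b : t → E) (i : ↥(s ∩ t)) : E := b ⟨i, (mem_inter.1 i.2).2⟩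
  have hsupp : ∀ x, pushforward φ P x ≠ 0 → ρs x.1 = ρt x.2 := by
    intro x hx
    obtain ⟨w, rfl⟩ : x ∈ Set.range φ := by
      by_contra hx'
      exact hx (pushforward_apply_of_notMem_range φ P hx')
    rfl
  have key := shannon_add_shannon_common_le (pushforward_nonneg (pushforward_nonneg hQ _) φ)
    ρs ρt hsupp
  have hfst : pushforward Prod.fst (pushforward φ P) = pushforward s.restrict Q := by
    rw [← pushforward_comp, ← pushforward_comp]; rfl
  have hsnd : pushforward Prod.snd (pushforward φ P) = pushforward t.restrict Q := by
    rw [← pushforward_comp, ← pushforward_comp]; rfl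
  have hinter : pushforward (ρs ∘ Prod.fst) (pushforward φ P)
      = pushforward (s ∩ t).restrict Q := by
    rw [← pushforward_comp, ← pushforward_comp]; rfl
  rwa [shannon_pushforward_of_injective hφ, hfst, hsnd, hinter] at key

end Marginal

theorem jointEntropy_eq_marginalEntropy {Ω E : Type*} [Fintype Ω] [Fintype E] [DecidableEq E]
    {n : ℕ} (p : Ω → ℝ) (X : Fin n → Ω → E) :
    jointEntropy p X = marginalEntropy (pushforward (fun ω i => X i ω) p) := by
  ext α
  rw [marginalEntropy, ← pushforward_comp]
  simp [jointEntropy, shannon, pushforward, funext_iff]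

section Slices

variable {α : Type*} [DecidableEq α] {F : Finset α → ℝ}

theorem add_le_add_insert_of_submodular (hF : ∀ s t, F (s ∪ t) + F (s ∩ t) ≤ F s + F t)
    (A : Finset α) {i j : α} (hij : i ≠ j) :
    F (insert j (insert i A)) + F A ≤ F (insert i A) + F (insert j A) := by
  have hunion : insert i A ∪ insert j A = insert j (insert i A) := by
    ext x; simp only [mem_union, mem_insert]; tauto
  have hinter : insert i A ∩ insert j A = A := by
    ext x; simp only [mem_inter, mem_insert]
    constructor
    · rintro ⟨rfl | hx, rfl | hx⟩ <;> first | exact absurd rfl hij | assumption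
    · exact fun hx => ⟨Or.inr hx, Or.inr hx⟩
  simpa only [hunion, hinter] using hF (insert i A) (insert j A)

variable [Fintype α]

theorem Finset.cast_card_compl (A : Finset α) : (#Aᶜ : ℝ) = Fintype.card α - #A := by
  rw [card_compl, Nat.cast_sub (card_le_univ A)]

theorem sum_powersetCard_sum_compl_insert (k : ℕ) (F : Finset α → ℝ) :
    ∑ A ∈ powersetCard k univ, ∑ i ∈ Aᶜ, F (insert i A)
      = (k + 1) * ∑ B ∈ powersetCard (k + 1) univ, F B := by
  have hB : ∀ B ∈ powersetCard (k + 1) (univ : Finset α), ∑ _i ∈ B, F B = (k + 1) * F B :=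
    fun B hB => by simp [mem_powersetCard_univ.1 hB]
  rw [mul_sum, ← sum_congr rfl hB, sum_sigma', sum_sigma']
  refine sum_nbij' (fun x => ⟨insert x.2 x.1, x.2⟩) (fun y => ⟨y.1.erase y.2, y.2⟩) ?_ ?_ ?_ ?_
    fun _ _ => rfl
  · rintro ⟨A, i⟩ hx
    simp only [mem_sigma, mem_powersetCard_univ, mem_compl] at hx ⊢
    exact ⟨by rw [card_insert_of_notMem hx.2, hx.1], mem_insert_self i A⟩
  · rintro ⟨B, i⟩ hy
    simp only [mem_sigma, mem_powersetCard_univ, mem_compl] at hy ⊢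
    exact ⟨by rw [card_erase_of_mem hy.2, hy.1, Nat.add_sub_cancel], notMem_erase i B⟩
  · rintro ⟨A, i⟩ hx
    simp only [mem_sigma, mem_powersetCard_univ, mem_compl] at hx
    simp only [Sigma.mk.inj_iff, heq_eq_eq, and_true]
    exact erase_insert hx.2
  · rintro ⟨B, i⟩ hy
    simp only [mem_sigma, mem_powersetCard_univ] at hy
    simp only [Sigma.mk.inj_iff, heq_eq_eq, and_true]
    exact insert_erase hy.2

/-- Double counting of the submodularity inequalities
`F (A ∪ {i, j}) + F A ≤ F (A ∪ {i}) + F (A ∪ {j})` over all `#A = k` and `i ≠ j` outside `A`. -/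
theorem weighted_sum_powersetCard_le_of_submodular
    (hF : ∀ s t, F (s ∪ t) + F (s ∩ t) ≤ F s + F t) (k : ℕ) :
    ((k : ℝ) + 1) * (k + 2) * ∑ C ∈ powersetCard (k + 2) univ, F C
      + (Fintype.card α - k) * (Fintype.card α - k - 1) * ∑ A ∈ powersetCard k univ, F A
      ≤ 2 * (Fintype.card α - k - 1) * (k + 1) * ∑ B ∈ powersetCard (k + 1) univ, F B := by
  set n : ℝ := (Fintype.card α : ℝ)
  set D : Finset α → ℝ := fun A => ∑ j ∈ Aᶜ, F (insert j A)
  have hstep : ∀ A ∈ powersetCard k (univ : Finset α),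
      ∑ i ∈ Aᶜ, D (insert i A) + (n - k) * (n - k - 1) * F A ≤ 2 * (n - k - 1) * D A := by
    intro A hA
    have hcard : (#Aᶜ : ℝ) = n - k := by rw [cast_card_compl, mem_powersetCard_univ.1 hA]
    have hpair : ∀ i ∈ Aᶜ, D (insert i A) + (n - k - 1) * F A
        ≤ (n - k - 2) * F (insert i A) + D A := by
      intro i hi
      have hcard' : (#(insert i A)ᶜ : ℝ) = n - k - 1 := by
        rw [compl_insert, card_erase_of_mem hi, Nat.cast_pred (card_pos.2 ⟨i, hi⟩), hcard]
      have hrest : ∑ j ∈ (insert i A)ᶜ, F (insert j A) = D A - F (insert i A) := by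
        rw [compl_insert]; exact sum_erase_eq_sub hi
      have := sum_le_sum fun j (hj : j ∈ (insert i A)ᶜ) => add_le_add_insert_of_submodular hF A
        (ne_of_mem_of_not_mem (mem_insert_self i A) (mem_compl.1 hj))
      rw [sum_add_distrib, sum_add_distrib, sum_const, sum_const, hrest, nsmul_eq_mul,
        nsmul_eq_mul, hcard'] at this
      linarith
    have := sum_le_sum hpair
    rw [sum_add_distrib, sum_add_distrib, ← sum_mul, ← mul_sum, sum_const, sum_const,
      nsmul_eq_mul, nsmul_eq_mul, hcard] at this
    linarith
  have hD : ∀ j, ∑ A ∈ powersetCard j (univ : Finset α), D A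
      = (j + 1) * ∑ B ∈ powersetCard (j + 1) univ, F B := fun j =>
    sum_powersetCard_sum_compl_insert j F
  have := sum_le_sum hstep
  rw [sum_add_distrib, sum_powersetCard_sum_compl_insert, hD, ← mul_sum, ← mul_sum, hD] at this
  push_cast at this
  linarith

end Slices

theorem Nat.cast_choose_succ_mul {n k : ℕ} (hk : k ≤ n) :
    (n.choose (k + 1) : ℝ) * (k + 1) = n.choose k * (n - k) := by
  rw [← Nat.cast_sub hk]
  exact_mod_cast Nat.choose_succ_right_eq n k

section SliceAverage

variable {α : Type*} [Fintype α] {F : Finset α → ℝ}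

noncomputable def sliceAverage (F : Finset α → ℝ) (k : ℕ) : ℝ :=
  ((Fintype.card α).choose k : ℝ)⁻¹ * ∑ s ∈ powersetCard k univ, F s

theorem sliceAverage_zero (F : Finset α → ℝ) : sliceAverage F 0 = F ∅ := by
  simp [sliceAverage]

theorem sliceAverage_le_of_monotone (hF : Monotone F) {k : ℕ} (hk : k ≤ Fintype.card α) :
    sliceAverage F k ≤ F univ := by
  have hchoose : (0 : ℝ) < (Fintype.card α).choose k := by exact_mod_cast Nat.choose_pos hk
  rw [sliceAverage, inv_mul_le_iff₀ hchoose]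
  calc ∑ s ∈ powersetCard k univ, F s ≤ ∑ _s ∈ powersetCard k univ, F univ :=
        sum_le_sum fun s _ => hF (subset_univ s)
    _ = _ := by rw [sum_const, card_powersetCard, card_univ, nsmul_eq_mul]

theorem sliceAverage_card (F : Finset α → ℝ) : sliceAverage F (Fintype.card α) = F univ := by
  simp [sliceAverage, ← card_univ, powersetCard_self]

theorem sliceAverage_add_sliceAverage_le_of_submodular [DecidableEq α]
    (hF : ∀ s t, F (s ∪ t) + F (s ∩ t) ≤ F s + F t) {k : ℕ} (hk : k + 2 ≤ Fintype.card α) :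
    sliceAverage F k + sliceAverage F (k + 2) ≤ 2 * sliceAverage F (k + 1) := by
  set n := Fintype.card α
  have hchoose : ∀ j ≤ n, (n.choose j : ℝ) ≠ 0 := fun j hj => by
    exact_mod_cast (Nat.choose_pos hj).ne'
  have hsum : ∀ j ≤ n, ∑ s ∈ powersetCard j univ, F s = n.choose j * sliceAverage F j :=
    fun j hj => by rw [sliceAverage, mul_inv_cancel_left₀ (hchoose j hj)]
  have hW := weighted_sum_powersetCard_le_of_submodular hF k
  rw [hsum k (by omega), hsum (k + 1) (by omega), hsum (k + 2) hk] at hW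
  have h₁ := Nat.cast_choose_succ_mul (n := n) (k := k) (by omega)
  have h₂ := Nat.cast_choose_succ_mul (n := n) (k := k + 1) (by omega)
  have hM : 0 < (n.choose k : ℝ) * (n - k) * (n - k - 1) := by
    have hkn : (k : ℝ) + 2 ≤ n := by exact_mod_cast hk
    have hc : (0 : ℝ) < n.choose k := by exact_mod_cast Nat.choose_pos (by omega)
    exact mul_pos (mul_pos hc (by linarith)) (by linarith)
  push_cast at h₂
  refine le_of_mul_le_mul_left ?_ hM
  linear_combination hW + (2 * (n - k - 1) * sliceAverage F (k + 1)
    - (n - k - 1) * sliceAverage F (k + 2)) * h₁ - (k + 1) * sliceAverage F (k + 2) * h₂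

end SliceAverage

/-- For any discrete random vector, the average entropy function (with the
conventions `h_0 = 0`, `h_{n+1} = h_n`) has nonpositive second differences:
`h_{m-1} - 2h_m + h_{m+1} ≤ 0` for `m = 1,…,n`. -/
theorem average_entropy_concave (n : ℕ) (Ω E : Type) [Fintype Ω] [Fintype E] [DecidableEq E]
    (p : Ω → ℝ) (hp0 : ∀ ω, 0 ≤ p ω) (hp1 : ∑ ω, p ω = 1)
    (X : Fin n → Ω → E) (h : ℕ → ℝ)
    (hdef : ∀ m, 1 ≤ m → m ≤ n → h m = ((n.choose m : ℝ))⁻¹ *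
      ∑ α ∈ powersetCard m (univ : Finset (Fin n)), jointEntropy p X α)
    (h0 : h 0 = 0) (hn1 : h (n + 1) = h n) :
    ∀ m, 1 ≤ m → m ≤ n → h (m - 1) - 2 * h m + h (m + 1) ≤ 0 := by
  set Q := pushforward (fun ω i => X i ω) p
  have hQ : ∀ x, 0 ≤ Q x := pushforward_nonneg hp0 _
  have hF := jointEntropy_eq_marginalEntropy p X
  have hslice : ∀ k ≤ n, h k = sliceAverage (jointEntropy p X) k := by
    rintro (_ | k) hk
    · rw [h0, sliceAverage_zero, hF, marginalEntropy_empty (by rw [sum_pushforward, hp1])]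
    · rw [hdef _ (Nat.succ_pos k) hk, sliceAverage, Fintype.card_fin]
  intro m hm1 hmn
  rcases hmn.lt_or_eq with hlt | heq
  · obtain ⟨k, rfl⟩ : ∃ k, m = k + 1 := ⟨m - 1, by omega⟩
    rw [Nat.add_sub_cancel, hslice k (by omega), hslice (k + 1) hmn, hslice (k + 2) hlt]
    have := sliceAverage_add_sliceAverage_le_of_submodular
      (hF ▸ marginalEntropy_submodular hQ) (k := k) (by rw [Fintype.card_fin]; omega)
    linarith
  · have hmono : Monotone (jointEntropy p X) := hF ▸ fun s t => marginalEntropy_mono hQ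
    have hle := sliceAverage_le_of_monotone hmono (k := n - 1) (by simp)
    have hcard := sliceAverage_card (jointEntropy p X)
    rw [Fintype.card_fin] at hcard
    rw [heq, hn1, hslice (n - 1) (by omega), hslice n le_rfl, hcard]
    linarith
end

section
/- The image Φ_n = Ψ(Γ_n) of the Shannon cone under the averaging map equals exactly the set {(h_1,...,h_n) ∈ ℝ^n : h_{m-1} − 2h_m + h_{m+1} ≤ 0 for m = 1,...,n}, where h_0 = 0 and h_{n+1} = h_n. -/
open Finset Real

/-- Extend `h : Fin n → ℝ` (1-indexed as `h_1,…,h_n`) to `ℕ` with the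
conventions `h_0 = 0` and `h_m = h_n` for `m > n`. -/
noncomputable def pad (n : ℕ) (h : Fin n → ℝ) : ℕ → ℝ := fun m =>
  if m = 0 then 0
  else if hm : m - 1 < n then h ⟨m - 1, hm⟩
  else if hn : n - 1 < n then h ⟨n - 1, hn⟩ else 0

/-- The cone `Φ_n` of vectors whose padded sequence has nonpositive second differences. -/
def Phi (n : ℕ) : Set (Fin n → ℝ) :=
  {h | ∀ m, 1 ≤ m → m ≤ n → pad n h (m - 1) - 2 * pad n h m + pad n h (m + 1) ≤ 0}

/-- The second-order difference map `Θ`, with conventions `h_0 = 0`, `h_{n+1} = h_n`. -/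
noncomputable def theta (n : ℕ) (h : Fin n → ℝ) : Fin n → ℝ :=
  fun i => pad n h i.val - 2 * pad n h (i.val + 1) + pad n h (i.val + 2)

/-- The Shannon cone `Γ_n`: vectors indexed by subsets of `{1,…,n}` (with value
`0` at `∅`) satisfying nonnegativity, monotonicity and submodularity. -/
def Gamma (n : ℕ) : Set (Finset (Fin n) → ℝ) :=
  {H | H ∅ = 0 ∧ (∀ α, 0 ≤ H α) ∧ (∀ α β, α ⊆ β → H α ≤ H β) ∧
    ∀ α β, H (α ∪ β) + H (α ∩ β) ≤ H α + H β}

/-- The averaging map `Ψ`: `h_m = C(n,m)⁻¹ Σ_{|α|=m} H α` (1-indexed). -/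
noncomputable def psi (n : ℕ) (H : Finset (Fin n) → ℝ) : Fin n → ℝ :=
  fun i => ((n.choose (i.val + 1) : ℝ))⁻¹ *
    ∑ α ∈ powersetCard (i.val + 1) (univ : Finset (Fin n)), H α

/-!
For `H ∈ Γ_n`, sum the submodularity inequality `H(s ∪ {x,y}) + H(s) ≤ H(s ∪ {x}) + H(s ∪ {y})`
over all `k`-sets `s` and ordered pairs `x ≠ y` outside `s`; counting how often each set occurs
turns it into `h_k - 2 h_{k+1} + h_{k+2} ≤ 0` for the level averages, while the last condition
`h_{n-1} ≤ h_n` is monotonicity. With `h_0 = 0` and `h_m = h_n` for `m > n`, the conditions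
defining `Φ_n` say exactly that the padded sequence is concave on all of `ℕ`.

Conversely, a concave sequence `g` that is constant from `n` on is nondecreasing, and
`H α = g |α|` lies in `Γ_n`: since `|α ∪ β| + |α ∩ β| = |α| + |β|` with
`|α ∩ β| ≤ |α| ≤ |α ∪ β|`, submodularity is an instance of concavity. Its averages are `g`.
-/

namespace Finset

variable {α : Type*} [Fintype α] [DecidableEq α]

theorem sum_powersetCard_succ_sum_mem {M : Type*} [AddCommMonoid M] (k : ℕ)
    (g : Finset α → α → M) :
    ∑ t ∈ powersetCard (k + 1) (univ : Finset α), ∑ x ∈ t, g t x =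
      ∑ s ∈ powersetCard k (univ : Finset α), ∑ x ∈ sᶜ, g (insert x s) x := by
  rw [sum_sigma', sum_sigma']
  refine sum_nbij' (fun p => ⟨p.1.erase p.2, p.2⟩) (fun p => ⟨insert p.2 p.1, p.2⟩)
    ?_ ?_ ?_ ?_ ?_
  · rintro ⟨t, x⟩ hp
    simp only [mem_sigma, mem_powersetCard_univ, mem_compl] at hp ⊢
    simp [card_erase_of_mem hp.2, hp.1]
  · rintro ⟨s, x⟩ hp
    simp only [mem_sigma, mem_powersetCard_univ, mem_compl] at hp ⊢
    simp [card_insert_of_notMem hp.2, hp.1]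
  · rintro ⟨t, x⟩ hp
    simp [insert_erase (mem_sigma.1 hp).2]
  · rintro ⟨s, x⟩ hp
    simp [erase_insert (mem_compl.1 (mem_sigma.1 hp).2)]
  · rintro ⟨t, x⟩ hp
    simp [insert_erase (mem_sigma.1 hp).2]

theorem cast_card_compl_s5 (s : Finset α) :
    (#sᶜ : ℝ) = Fintype.card α - #s := by
  rw [card_compl, Nat.cast_sub (card_le_univ s)]

theorem sum_sum_erase_add {ι : Type*} [DecidableEq ι] (c : Finset ι) (a : ι → ℝ) :
    ∑ x ∈ c, ∑ y ∈ c.erase x, (a x + a y) = 2 * (#c - 1) * ∑ x ∈ c, a x := by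
  have inner : ∀ x ∈ c, ∑ y ∈ c.erase x, (a x + a y) = (#c - 2) * a x + ∑ y ∈ c, a y := by
    intro x hx
    rw [sum_add_distrib, sum_const, card_erase_of_mem hx, nsmul_eq_mul,
      Nat.cast_sub (card_pos.2 ⟨x, hx⟩), sum_erase_eq_sub hx]
    push_cast
    ring
  rw [sum_congr rfl inner, sum_add_distrib, sum_const, nsmul_eq_mul, ← mul_sum]
  ring

end Finset

theorem Nat.cast_choose_succ_right_eq (n k : ℕ) (hk : k ≤ n) :
    (n.choose (k + 1) : ℝ) * (k + 1) = n.choose k * (n - k) := by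
  rw [← Nat.cast_sub hk]
  exact_mod_cast Nat.choose_succ_right_eq n k

section LevelSums

open Finset

variable {α : Type*} [Fintype α]

def levelSum (f : Finset α → ℝ) (k : ℕ) : ℝ :=
  ∑ s ∈ powersetCard k (univ : Finset α), f s

noncomputable def levelAvg (f : Finset α → ℝ) (k : ℕ) : ℝ :=
  ((Fintype.card α).choose k : ℝ)⁻¹ * levelSum f k

theorem levelSum_eq_choose_mul_levelAvg (f : Finset α → ℝ) {k : ℕ}
    (hk : k ≤ Fintype.card α) :
    levelSum f k = (Fintype.card α).choose k * levelAvg f k := by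
  have hpos : ((Fintype.card α).choose k : ℝ) ≠ 0 := by
    exact_mod_cast (Nat.choose_pos hk).ne'
  rw [levelAvg, ← mul_assoc, mul_inv_cancel₀ hpos, one_mul]

theorem levelAvg_zero (f : Finset α → ℝ) : levelAvg f 0 = f ∅ := by
  simp [levelAvg, levelSum]

theorem levelAvg_card (f : Finset α → ℝ) : levelAvg f (Fintype.card α) = f univ := by
  simp [levelAvg, levelSum, ← card_univ, powersetCard_self]

theorem levelAvg_le_apply_univ {f : Finset α → ℝ} (hf : Monotone f) {k : ℕ}
    (hk : k ≤ Fintype.card α) : levelAvg f k ≤ f univ := by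
  have hpos : (0 : ℝ) < (Fintype.card α).choose k := by exact_mod_cast Nat.choose_pos hk
  have hsum : levelSum f k ≤ (Fintype.card α).choose k * f univ := by
    calc levelSum f k ≤ ∑ _s ∈ powersetCard k (univ : Finset α), f univ :=
          sum_le_sum fun s _ => hf (subset_univ s)
      _ = (Fintype.card α).choose k * f univ := by
          rw [sum_const, card_powersetCard, card_univ, nsmul_eq_mul]
  rw [levelAvg, inv_mul_le_iff₀ hpos]
  exact hsum

theorem levelAvg_comp_card (g : ℕ → ℝ) {k : ℕ} (hk : k ≤ Fintype.card α) :
    levelAvg (fun s : Finset α => g #s) k = g k := by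
  have hpos : ((Fintype.card α).choose k : ℝ) ≠ 0 := by
    exact_mod_cast (Nat.choose_pos hk).ne'
  rw [levelAvg, levelSum, sum_congr rfl fun s hs => by rw [mem_powersetCard_univ.1 hs],
    sum_const, card_powersetCard, card_univ, nsmul_eq_mul, ← mul_assoc, inv_mul_cancel₀ hpos,
    one_mul]

variable [DecidableEq α]

theorem sum_sum_compl_insert (f : Finset α → ℝ) (k : ℕ) :
    ∑ s ∈ powersetCard k (univ : Finset α), ∑ x ∈ sᶜ, f (insert x s) =
      (k + 1) * levelSum f (k + 1) := by
  rw [← sum_powersetCard_succ_sum_mem k (fun t _ => f t), levelSum, mul_sum]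
  refine sum_congr rfl fun t ht => ?_
  rw [sum_const, (mem_powersetCard_univ.1 ht), nsmul_eq_mul]
  push_cast
  ring

theorem sum_compl_sum_compl_insert_le (f : Finset α → ℝ)
    (hf : ∀ s t, f (s ∪ t) + f (s ∩ t) ≤ f s + f t) (s : Finset α) :
    ∑ x ∈ sᶜ, ∑ y ∈ (insert x s)ᶜ, (f (insert y (insert x s)) + f s) ≤
      2 * (#sᶜ - 1) * ∑ x ∈ sᶜ, f (insert x s) := by
  rw [← sum_sum_erase_add]
  refine sum_le_sum fun x hx => ?_
  rw [compl_insert]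
  refine sum_le_sum fun y hy => ?_
  have hys : y ∉ s := mem_compl.1 (mem_of_mem_erase hy)
  have hxs : x ∉ s := mem_compl.1 hx
  have hxy : x ≠ y := (ne_of_mem_erase hy).symm
  have hunion : insert x s ∪ insert y s = insert y (insert x s) := by
    ext a; simp only [mem_union, mem_insert]; tauto
  have hinter : insert x s ∩ insert y s = s := by
    ext a; simp only [mem_inter, mem_insert]; grind
  simpa only [hunion, hinter] using hf (insert x s) (insert y s)

theorem levelSum_second_diff_le (f : Finset α → ℝ)
    (hf : ∀ s t, f (s ∪ t) + f (s ∩ t) ≤ f s + f t) (k : ℕ) :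
    (k + 2) * (k + 1) * levelSum f (k + 2) +
        (Fintype.card α - k) * (Fintype.card α - k - 1) * levelSum f k ≤
      2 * (k + 1) * (Fintype.card α - k - 1) * levelSum f (k + 1) := by
  set N : ℝ := (Fintype.card α : ℝ)
  have card_compl_insert : ∀ s ∈ powersetCard k (univ : Finset α), ∀ x ∈ sᶜ,
      (#(insert x s)ᶜ : ℝ) = N - k - 1 := by
    intro s hs x hx
    rw [cast_card_compl_s5, card_insert_of_notMem (mem_compl.1 hx), mem_powersetCard_univ.1 hs]
    push_cast
    ring
  have pointwise : ∀ s ∈ powersetCard k (univ : Finset α),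
      ∑ x ∈ sᶜ, ∑ y ∈ (insert x s)ᶜ, (f (insert y (insert x s)) + f s) ≤
        2 * (N - k - 1) * ∑ x ∈ sᶜ, f (insert x s) := by
    intro s hs
    have hcard : (#sᶜ : ℝ) = N - k := by rw [cast_card_compl_s5, mem_powersetCard_univ.1 hs]
    simpa only [hcard] using sum_compl_sum_compl_insert_le f hf s
  have triple : ∑ s ∈ powersetCard k (univ : Finset α), ∑ x ∈ sᶜ, ∑ y ∈ (insert x s)ᶜ,
      f (insert y (insert x s)) = (k + 2) * (k + 1) * levelSum f (k + 2) := by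
    rw [← sum_powersetCard_succ_sum_mem k (fun t _ => ∑ y ∈ tᶜ, f (insert y t))]
    have hconst : ∀ t ∈ powersetCard (k + 1) (univ : Finset α),
        ∑ _x ∈ t, ∑ y ∈ tᶜ, f (insert y t) = (k + 1) * ∑ y ∈ tᶜ, f (insert y t) := by
      intro t ht
      rw [sum_const, mem_powersetCard_univ.1 ht, nsmul_eq_mul]
      push_cast
      ring
    rw [sum_congr rfl hconst, ← mul_sum, sum_sum_compl_insert]
    push_cast
    ring
  have base : ∑ s ∈ powersetCard k (univ : Finset α), ∑ x ∈ sᶜ, ∑ y ∈ (insert x s)ᶜ, f s =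
      (N - k) * (N - k - 1) * levelSum f k := by
    rw [levelSum, mul_sum]
    refine sum_congr rfl fun s hs => ?_
    rw [sum_congr rfl fun x hx => by rw [sum_const, nsmul_eq_mul, card_compl_insert s hs x hx],
      sum_const, nsmul_eq_mul, cast_card_compl_s5, mem_powersetCard_univ.1 hs]
    ring
  have summed := sum_le_sum pointwise
  simp only [sum_add_distrib, triple, base, ← mul_sum, sum_sum_compl_insert] at summed
  linarith

theorem levelAvg_second_diff_nonpos (f : Finset α → ℝ)
    (hf : ∀ s t, f (s ∪ t) + f (s ∩ t) ≤ f s + f t) {k : ℕ} (hk : k + 2 ≤ Fintype.card α) :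
    levelAvg f k - 2 * levelAvg f (k + 1) + levelAvg f (k + 2) ≤ 0 := by
  have key := levelSum_second_diff_le f hf k
  rw [levelSum_eq_choose_mul_levelAvg f (k := k) (by omega),
    levelSum_eq_choose_mul_levelAvg f (k := k + 1) (by omega),
    levelSum_eq_choose_mul_levelAvg f hk] at key
  set N := Fintype.card α
  have h₀ := Nat.cast_choose_succ_right_eq N k (by omega)
  have h₁ := Nat.cast_choose_succ_right_eq N (k + 1) (by omega)
  push_cast at h₁
  have hpos : (0 : ℝ) < (k + 1) * (N - k - 1) * N.choose (k + 1) := by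
    have hN : (k : ℝ) + 2 ≤ N := by exact_mod_cast hk
    have hc : 0 < N.choose (k + 1) := Nat.choose_pos (by omega)
    have : (0 : ℝ) < N - k - 1 := by linarith
    positivity
  refine nonpos_of_mul_nonpos_right ?_ hpos
  linear_combination key - (k + 1) * levelAvg f (k + 2) * h₁ +
    (N - k - 1) * levelAvg f k * h₀

end LevelSums

section SecondDifferences

variable {g : ℕ → ℝ}

theorem sub_le_sub_of_second_diff_nonpos
    (hg : ∀ k, g (k + 2) - g (k + 1) ≤ g (k + 1) - g k) {i j : ℕ} (hij : i ≤ j) (d : ℕ) :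
    g (j + d) - g j ≤ g (i + d) - g i := by
  have hanti : Antitone fun k => g (k + 1) - g k := antitone_nat_of_succ_le hg
  induction d with
  | zero => simp
  | succ d ih =>
    have := hanti (show i + d ≤ j + d by omega)
    simp only [← add_assoc] at this ⊢
    linarith

theorem monotone_of_second_diff_nonpos
    (hg : ∀ k, g (k + 2) - g (k + 1) ≤ g (k + 1) - g k) {n : ℕ} (hconst : ∀ m, n ≤ m → g m = g n) :
    Monotone g := by
  refine monotone_nat_of_le_succ fun m => ?_
  have := sub_le_sub_of_second_diff_nonpos hg (show m ≤ m + n by omega) 1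
  rw [hconst (m + n + 1) (by omega), hconst (m + n) (by omega)] at this
  linarith

theorem comp_card_union_add_comp_card_inter_le {ι : Type*} [DecidableEq ι]
    (hg : ∀ k, g (k + 2) - g (k + 1) ≤ g (k + 1) - g k) (s t : Finset ι) :
    g #(s ∪ t) + g #(s ∩ t) ≤ g #s + g #t := by
  have hsum := card_union_add_card_inter s t
  have hinter : #(s ∩ t) ≤ #s := card_le_card inter_subset_left
  have hunion : #s ≤ #(s ∪ t) := card_le_card subset_union_left
  have := sub_le_sub_of_second_diff_nonpos hg hinter (#(s ∪ t) - #s)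
  rw [Nat.add_sub_cancel' hunion, show #(s ∩ t) + (#(s ∪ t) - #s) = #t by omega] at this
  linarith

end SecondDifferences

theorem pad_zero (n : ℕ) (h : Fin n → ℝ) : pad n h 0 = 0 := by
  simp [pad]

theorem pad_succ {n : ℕ} (h : Fin n → ℝ) (i : Fin n) : pad n h (i + 1) = h i := by
  simp [pad]

theorem pad_of_le {n m : ℕ} (h : Fin n → ℝ) (hm : n ≤ m) : pad n h m = pad n h n := by
  unfold pad
  split_ifs <;> first | rfl | omega | exact congrArg h (Fin.ext (by simp only; omega))

theorem mem_Phi_iff {n : ℕ} {h : Fin n → ℝ} :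
    h ∈ Phi n ↔ ∀ k, pad n h (k + 2) - pad n h (k + 1) ≤ pad n h (k + 1) - pad n h k := by
  constructor
  · intro hh k
    rcases lt_or_ge k n with hk | hk
    · have := hh (k + 1) (by omega) hk
      simp only [Nat.add_sub_cancel] at this
      linarith
    · rw [pad_of_le h (m := k + 2) (by omega), pad_of_le h (m := k + 1) (by omega),
        pad_of_le h hk]
  · intro hh m hm _
    obtain ⟨k, rfl⟩ : ∃ k, m = k + 1 := ⟨m - 1, by omega⟩
    have := hh k
    simp only [Nat.add_sub_cancel]
    linarith

theorem psi_apply_eq_levelAvg {n : ℕ} (H : Finset (Fin n) → ℝ) (i : Fin n) :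
    psi n H i = levelAvg H (i + 1) := by
  rw [levelAvg, levelSum, Fintype.card_fin]
  rfl

theorem pad_psi {n m : ℕ} {H : Finset (Fin n) → ℝ} (hH : H ∅ = 0) (hm : m ≤ n) :
    pad n (psi n H) m = levelAvg H m := by
  rcases m with _ | k
  · rw [pad_zero, levelAvg_zero, hH]
  · exact (pad_succ (psi n H) ⟨k, hm⟩).trans (psi_apply_eq_levelAvg H ⟨k, hm⟩)

theorem pad_psi_second_diff_nonpos {n : ℕ} {H : Finset (Fin n) → ℝ} (hH : H ∅ = 0)
    (hmono : Monotone H) (hsub : ∀ s t, H (s ∪ t) + H (s ∩ t) ≤ H s + H t) (k : ℕ) :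
    pad n (psi n H) (k + 2) - pad n (psi n H) (k + 1) ≤
      pad n (psi n H) (k + 1) - pad n (psi n H) k := by
  rcases lt_trichotomy (k + 1) n with hk | hk | hk
  · have := levelAvg_second_diff_nonpos H hsub (k := k) (by rw [Fintype.card_fin]; omega)
    rw [pad_psi hH hk, pad_psi hH hk.le, pad_psi hH (by omega)]
    linarith
  · subst hk
    have := levelAvg_le_apply_univ hmono (k := k) (by simp)
    have hn := levelAvg_card H
    rw [Fintype.card_fin] at hn
    rw [pad_of_le _ (m := k + 2) (by omega), pad_psi hH le_rfl, hn, pad_psi hH (by omega)]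
    linarith
  · rw [pad_of_le _ (m := k + 2) (by omega), pad_of_le _ (m := k + 1) (by omega),
      pad_of_le _ (m := k) (by omega)]

theorem comp_card_mem_Gamma {n : ℕ} {g : ℕ → ℝ}
    (hg : ∀ k, g (k + 2) - g (k + 1) ≤ g (k + 1) - g k) (hg0 : g 0 = 0) (hmono : Monotone g) :
    (fun s : Finset (Fin n) => g #s) ∈ _root_.Gamma n := by
  exact ⟨by simpa using hg0, fun s => hg0 ▸ hmono (Nat.zero_le _),
    fun s t hst => hmono (card_le_card hst), comp_card_union_add_comp_card_inter_le hg⟩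

theorem psi_comp_card {n : ℕ} (g : ℕ → ℝ) (i : Fin n) :
    psi n (fun s => g #s) i = g (i + 1) := by
  rw [psi_apply_eq_levelAvg, levelAvg_comp_card]
  simp

/-- `Φ_n = Ψ(Γ_n)`: the image of the Shannon cone under averaging is exactly the
cone of second-difference inequalities. -/
theorem psi_image_Gamma (n : ℕ) : psi n '' Gamma n = Phi n := by
  ext h
  rw [Set.mem_image, mem_Phi_iff]
  constructor
  · rintro ⟨H, ⟨hH0, -, hmono, hsub⟩, rfl⟩
    exact pad_psi_second_diff_nonpos hH0 hmono hsub
  · intro hconcave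
    have hmono := monotone_of_second_diff_nonpos hconcave fun m hm => pad_of_le h hm
    refine ⟨fun s => pad n h #s, comp_card_mem_Gamma hconcave (pad_zero n h) hmono, ?_⟩
    funext i
    rw [psi_comp_card, pad_succ]
end

section
/- For each k with 1 ≤ k ≤ n and each prime power q > n, the vector h = (log q)·(1, 2, ..., k, k, ..., k) ∈ ℝ^n (i.e., h_m = min(m,k)·log q) is an average entropy function: there exists a discrete random vector X = (X_1,...,X_n) whose average entropy function equals h. -/
open Finset Real

/-!
The witness is the Reed–Solomon code: `X_i = P(a_i)` for a uniformly random polynomial `P` of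
degree `< k` over `GF(q)` and distinct points `a_1, …, a_n` (they exist since `q > n`).
The map `P ↦ (P(a_i))_{i ∈ α}` is additive, so it pushes the uniform distribution forward to
the uniform distribution on its image and `H(X_α)` is the logarithm of the size of that image.
The map is injective when `|α| ≥ k` (a nonzero polynomial of degree `< k` has fewer than `k`
roots) and surjective when `|α| ≤ k` (Lagrange interpolation), so the image has
`q ^ min(|α|, k)` elements.
-/

open Polynomial

theorem sum_negMulLog_card_fiber_div_card_eq_log_natCard_range {Ω Y : Type*} [Fintype Ω]
    [Fintype Y] [DecidableEq Y] (f : Ω → Y)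
    (hf : ∀ x ∈ Set.range f, ∀ y ∈ Set.range f, #{ω | f ω = x} = #{ω | f ω = y}) :
    ∑ y, negMulLog (#{ω | f ω = y} / Fintype.card Ω : ℝ) = log (Nat.card (Set.range f)) := by
  rcases isEmpty_or_nonempty Ω with hΩ | ⟨⟨ω₀⟩⟩
  · simp
  set c := #{ω | f ω = f ω₀}
  set R := univ.image f
  have hR : Nat.card (Set.range f) = #R := by
    rw [Nat.card_eq_card_toFinset, Set.toFinset_range]
  have hc : 0 < c := card_pos.mpr ⟨ω₀, by simp⟩
  have hR0 : 0 < #R := card_pos.mpr ⟨f ω₀, mem_image_of_mem f (mem_univ ω₀)⟩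
  have hcard : Fintype.card Ω = #R * c := by
    rw [← card_univ, card_eq_sum_card_image f univ, sum_const_nat]
    rintro _ hy
    obtain ⟨ω, -, rfl⟩ := mem_image.mp hy
    simpa using hf _ ⟨ω, rfl⟩ _ ⟨ω₀, rfl⟩
  have hsum : ∑ y, negMulLog (#{ω | f ω = y} / Fintype.card Ω : ℝ)
      = ∑ y ∈ R, negMulLog (c / Fintype.card Ω : ℝ) := by
    rw [← sum_subset (subset_univ R)]
    · refine sum_congr rfl fun y hy => ?_
      obtain ⟨ω, -, rfl⟩ := mem_image.mp hy
      rw [hf _ ⟨ω, rfl⟩ _ ⟨ω₀, rfl⟩]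
    · intro y _ hy
      have hempty : #{ω | f ω = y} = 0 := by
        simp only [card_eq_zero, filter_eq_empty_iff]
        exact fun ω _ h => hy (h ▸ mem_image_of_mem f (mem_univ ω))
      simp [hempty]
  rw [hsum, hR, sum_const, nsmul_eq_mul, hcard, negMulLog]
  push_cast
  rw [div_mul_cancel_right₀ (by positivity), log_inv]
  field_simp

theorem jointEntropy_uniform_eq_log_natCard_range {Ω E : Type*} [AddGroup Ω] [Fintype Ω]
    [AddMonoid E] [Fintype E] [DecidableEq E] {n : ℕ} (X : Fin n → Ω →+ E) (α : Finset (Fin n)) :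
    jointEntropy (fun _ => (Fintype.card Ω : ℝ)⁻¹) (fun i => X i) α
      = log (Nat.card (Set.range fun ω (i : α) => X i ω)) := by
  let f : Ω →+ (α → E) := AddMonoidHom.pi fun i => X i
  calc jointEntropy (fun _ => (Fintype.card Ω : ℝ)⁻¹) (fun i => X i) α
      = ∑ y, negMulLog (#{ω | f ω = y} / Fintype.card Ω : ℝ) := by
        refine sum_congr rfl fun y _ => ?_
        simp only [sum_const, nsmul_eq_mul, div_eq_mul_inv, funext_iff]
        rfl
    _ = _ := sum_negMulLog_card_fiber_div_card_eq_log_natCard_range f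
          fun _ hx _ hy => AddMonoidHom.card_fiber_eq_of_mem_range f hx hy

section EvalDegreeLT

variable {R F ι : Type*} {k : ℕ} {s : Finset ι}

theorem injective_eval_degreeLT [CommRing R] [IsDomain R] {a : ι → R} (ha : Set.InjOn a s)
    (hk : k ≤ #s) : Function.Injective fun (P : degreeLT R k) (i : s) => (P : R[X]).eval (a i) := by
  have hdeg (P : degreeLT R k) : (P : R[X]).degree < #s :=
    (mem_degreeLT.mp P.2).trans_le (by exact_mod_cast hk)
  intro P Q hPQ
  exact Subtype.ext <| eq_of_degrees_lt_of_eval_index_eq s ha (hdeg P) (hdeg Q)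
    fun i hi => congrFun hPQ ⟨i, hi⟩

theorem surjective_eval_degreeLT [Field F] [DecidableEq ι] {a : ι → F} (ha : Set.InjOn a s)
    (hk : #s ≤ k) : Function.Surjective fun (P : degreeLT F k) (i : s) => (P : F[X]).eval (a i) := by
  intro y
  let r : ι → F := fun i => if h : i ∈ s then y ⟨i, h⟩ else 0
  have hdeg : (Lagrange.interpolate s a r).degree < k :=
    (Lagrange.degree_interpolate_lt r ha).trans_le (by exact_mod_cast hk)
  refine ⟨⟨_, mem_degreeLT.mpr hdeg⟩, funext fun i => ?_⟩
  change eval (a i) (Lagrange.interpolate s a r) = y i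
  rw [Lagrange.eval_interpolate_at_node r ha i.2]
  exact dif_pos i.2

theorem natCard_range_eval_degreeLT [Field F] [Finite F] (k : ℕ) {a : ι → F}
    (ha : Set.InjOn a s) :
    Nat.card (Set.range fun (P : degreeLT F k) (i : s) => (P : F[X]).eval (a i))
      = Nat.card F ^ min #s k := by
  classical
  rcases le_total k #s with hk | hk
  · rw [Nat.card_range_of_injective (injective_eval_degreeLT ha hk), min_eq_right hk,
      Nat.card_congr (degreeLTEquiv F k).toEquiv, Nat.card_fun, Nat.card_fin]
  · rw [(surjective_eval_degreeLT ha hk).range_eq, min_eq_left hk, Nat.card_univ, Nat.card_fun,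
      Nat.card_eq_fintype_card (α := s), Fintype.card_coe]

end EvalDegreeLT

theorem min_vector_is_average_entropy_general (n k q : ℕ)
    (hq : IsPrimePow q) (hqn : n < q) :
    ∃ (Ω : Type) (_ : Fintype Ω) (E : Type) (_ : Fintype E) (_ : DecidableEq E)
      (p : Ω → ℝ) (X : Fin n → Ω → E),
      (∀ ω, 0 ≤ p ω) ∧ (∑ ω, p ω = 1) ∧
      ∀ m, 1 ≤ m → m ≤ n →
        ((n.choose m : ℝ))⁻¹ * ∑ α ∈ powersetCard m (univ : Finset (Fin n)),
            jointEntropy p X α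
          = (min m k : ℕ) * Real.log q := by
  classical
  obtain ⟨r, e, hr, he, rfl⟩ := hq
  have : Fact r.Prime := ⟨hr.nat_prime⟩
  let F := GaloisField r e
  let _ : Fintype F := Fintype.ofFinite F
  have hF : Nat.card F = r ^ e := GaloisField.card r e he.ne'
  obtain ⟨a⟩ : Nonempty (Fin n ↪ F) := Function.Embedding.nonempty_of_card_le
    (by rw [Fintype.card_fin, ← Nat.card_eq_fintype_card, hF]; exact hqn.le)
  let _ : Fintype (degreeLT F k) := Fintype.ofEquiv _ (degreeLTEquiv F k).toEquiv.symm
  let X (i : Fin n) : degreeLT F k →+ F :=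
    ((leval (a i)).comp (degreeLT F k).subtype).toAddMonoidHom
  refine ⟨degreeLT F k, inferInstance, F, inferInstance, inferInstance,
    fun _ => (Fintype.card (degreeLT F k) : ℝ)⁻¹, fun i => X i, fun _ => by positivity,
    by simp, fun m _ hmn => ?_⟩
  have hentropy : ∀ α ∈ powersetCard m (univ : Finset (Fin n)),
      jointEntropy (fun _ => (Fintype.card (degreeLT F k) : ℝ)⁻¹) (fun i => X i) α
        = (min m k : ℕ) * log (r ^ e : ℕ) := by
    intro α hα
    rw [jointEntropy_uniform_eq_log_natCard_range, ← (mem_powersetCard.mp hα).2]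
    change log (Nat.card (Set.range fun (P : degreeLT F k) (i : α) => (P : F[X]).eval (a i))) = _
    rw [natCard_range_eval_degreeLT k a.injective.injOn, hF, Nat.cast_pow, log_pow]
  rw [sum_congr rfl hentropy, sum_const, card_powersetCard, card_univ, Fintype.card_fin,
    nsmul_eq_mul, inv_mul_cancel_left₀ (by exact_mod_cast (Nat.choose_pos hmn).ne')]

/-- For `1 ≤ k ≤ n` and a prime power `q > n`, the vector `h_m = min(m,k)·log q`
is an average entropy function of some discrete random vector. -/
theorem min_vector_is_average_entropy (n k q : ℕ) (hk1 : 1 ≤ k) (hkn : k ≤ n)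
    (hq : IsPrimePow q) (hqn : n < q) :
    ∃ (Ω : Type) (_ : Fintype Ω) (E : Type) (_ : Fintype E) (_ : DecidableEq E)
      (p : Ω → ℝ) (X : Fin n → Ω → E),
      (∀ ω, 0 ≤ p ω) ∧ (∑ ω, p ω = 1) ∧
      ∀ m, 1 ≤ m → m ≤ n →
        ((n.choose m : ℝ))⁻¹ * ∑ α ∈ powersetCard m (univ : Finset (Fin n)),
            jointEntropy p X α
          = (min m k : ℕ) * Real.log q :=
  min_vector_is_average_entropy_general n k q hq hqn
end

section
/- For any discrete random vector X = (X_1,...,X_n), the average entropy function satisfies: h_m/m is nonincreasing in m, i.e., h_m/m ≥ h_{m+1}/(m+1) for 1 ≤ m ≤ n−1. -/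
open Finset Real

namespace AvgEnt

set_option linter.unusedSectionVars false

variable {Ω E : Type*} [Fintype Ω] [Fintype E] [DecidableEq E] {n : ℕ}

noncomputable def marg (p : Ω → ℝ) (X : Fin n → Ω → E) (α : Finset (Fin n)) (y : α → E) : ℝ :=
  ∑ ω ∈ univ.filter (fun ω => ∀ i : α, X i ω = y i), p ω

def res {α β : Finset (Fin n)} (h : α ⊆ β) (z : β → E) : α → E :=
  fun i => z ⟨i.1, h i.2⟩

lemma jointEntropy_eq (p : Ω → ℝ) (X : Fin n → Ω → E) (α : Finset (Fin n)) :
    jointEntropy p X α = ∑ y : α → E, Real.negMulLog (marg p X α y) := rfl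

lemma marg_nonneg {p : Ω → ℝ} (hp0 : ∀ ω, 0 ≤ p ω) (X : Fin n → Ω → E)
    (α : Finset (Fin n)) (y : α → E) : 0 ≤ marg p X α y :=
  Finset.sum_nonneg fun ω _ => hp0 ω

private lemma ite_sum_push {c : Prop} [Decidable c] {f : Ω → ℝ} :
    (if c then ∑ a : Ω, f a else 0) = ∑ a : Ω, if c then f a else 0 := by
  split <;> simp

private lemma ite_mul_ite (c d : Prop) [Decidable c] [Decidable d] (a b : ℝ) :
    (if c then a else 0) * (if d then b else 0) = if c ∧ d then a * b else 0 := by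
  by_cases hc : c <;> by_cases hd : d <;> simp [hc, hd]

lemma marg_fiber {p : Ω → ℝ} {X : Fin n → Ω → E} {α β : Finset (Fin n)} (h : α ⊆ β)
    (y : α → E) :
    marg p X α y = ∑ z ∈ univ.filter (fun z : β → E => res h z = y), marg p X β z := by
  rw [Finset.sum_filter]
  unfold marg
  simp_rw [Finset.sum_filter, ite_sum_push]
  rw [Finset.sum_comm]
  apply Finset.sum_congr rfl
  intro ω _
  rw [Fintype.sum_eq_single (fun i : β => X i ω)]
  · have hres : res h (fun i : β => X (↑i) ω) = fun i : α => X (↑i) ω := rfl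
    rw [hres, if_pos (fun i : β => rfl : ∀ i : β, X (↑i) ω = (fun i : β => X (↑i) ω) i)]
    by_cases hy : ∀ i : α, X (↑i) ω = y i
    · rw [if_pos hy, if_pos (funext fun i => hy i)]
    · rw [if_neg hy, if_neg (fun hc => hy (fun i => congrFun hc i))]
  · intro z hz
    have hnc : ¬ (∀ i : β, X (↑i) ω = z i) := by
      intro hc; exact hz (funext fun i => (hc i).symm)
    rw [if_neg hnc, ite_self]

lemma marg_total {p : Ω → ℝ} {X : Fin n → Ω → E} (β : Finset (Fin n)) :
    ∑ z : β → E, marg p X β z = ∑ ω : Ω, p ω := by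
  unfold marg
  simp_rw [Finset.sum_filter]
  rw [Finset.sum_comm]
  apply Finset.sum_congr rfl
  intro ω _
  rw [Fintype.sum_eq_single (fun i : β => X i ω)]
  · rw [if_pos (fun i : β => rfl : ∀ i : β, X (↑i) ω = (fun i : β => X (↑i) ω) i)]
  · intro z hz
    have hnc : ¬ (∀ i : β, X (↑i) ω = z i) := by
      intro hc; exact hz (funext fun i => (hc i).symm)
    rw [if_neg hnc]

lemma sum_lift {p : Ω → ℝ} {X : Fin n → Ω → E} {α β : Finset (Fin n)} (h : α ⊆ β)
    (f : (α → E) → ℝ) :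
    ∑ z : β → E, marg p X β z * f (res h z) = ∑ y : α → E, marg p X α y * f y := by
  rw [← Finset.sum_fiberwise univ (fun z : β → E => res h z)
    (fun z => marg p X β z * f (res h z))]
  apply Finset.sum_congr rfl
  intro y _
  rw [marg_fiber h, Finset.sum_mul]
  apply Finset.sum_congr rfl
  intro z hz
  rw [(Finset.mem_filter.1 hz).2]

lemma marg_mono {p : Ω → ℝ} (hp0 : ∀ ω, 0 ≤ p ω) {X : Fin n → Ω → E}
    {α β : Finset (Fin n)} (h : α ⊆ β) (z : β → E) :
    marg p X β z ≤ marg p X α (res h z) := by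
  apply Finset.sum_le_sum_of_subset_of_nonneg
  · intro ω hω
    rw [Finset.mem_filter] at hω ⊢
    exact ⟨hω.1, fun i => hω.2 ⟨i.1, h i.2⟩⟩
  · intro ω _ _; exact hp0 ω

private lemma inner_bound {ι : Type*} [Fintype ι] {P : ι → Prop} [DecidablePred P]
    {Q : Prop} [Decidable Q] {c : ℝ} (hc : 0 ≤ c) (hPQ : ∀ z, P z → Q)
    (huniq : ∀ z1 z2, P z1 → P z2 → z1 = z2) :
    ∑ z : ι, (if P z then c else 0) ≤ if Q then c else 0 := by
  rw [← Finset.sum_filter, Finset.sum_const, nsmul_eq_mul]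
  by_cases hne : (univ.filter P).Nonempty
  · obtain ⟨z, hz⟩ := hne
    rw [Finset.mem_filter] at hz
    rw [if_pos (hPQ z hz.2)]
    have hcard : (univ.filter P).card ≤ 1 := by
      apply Finset.card_le_one.2
      intro a ha b hb
      rw [Finset.mem_filter] at ha hb
      exact huniq a b ha.2 hb.2
    calc ((univ.filter P).card : ℝ) * c ≤ 1 * c := by
          apply mul_le_mul_of_nonneg_right _ hc
          exact_mod_cast hcard
      _ = c := one_mul c
  · rw [Finset.not_nonempty_iff_eq_empty] at hne
    rw [hne]
    simp only [Finset.card_empty, Nat.cast_zero, zero_mul]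
    split
    · exact hc
    · exact le_refl 0

/-- The key product-fiber bound, giving `∑ r ≤ 1`. -/
lemma key {p : Ω → ℝ} (hp0 : ∀ ω, 0 ≤ p ω) {X : Fin n → Ω → E} (A B : Finset (Fin n))
    (w : ↑(A ∩ B) → E) :
    ∑ z ∈ univ.filter (fun z : ↑(A ∪ B) → E =>
        res (inter_subset_left.trans subset_union_left) z = w),
      marg p X A (res subset_union_left z) * marg p X B (res subset_union_right z)
      ≤ marg p X (A ∩ B) w * marg p X (A ∩ B) w := by
  have step : ∀ z : ↑(A ∪ B) → E,
      (if res (inter_subset_left.trans subset_union_left) z = w then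
          marg p X A (res subset_union_left z) * marg p X B (res subset_union_right z) else 0)
      = ∑ ω : Ω, ∑ ω' : Ω,
          (if res (inter_subset_left.trans subset_union_left) z = w
              ∧ (∀ i : A, X i ω = res (subset_union_left (s₂ := B)) z i)
              ∧ (∀ i : B, X i ω' = res (subset_union_right (s₁ := A)) z i)
            then p ω * p ω' else 0) := by
    intro z
    by_cases hz : res (inter_subset_left.trans subset_union_left) z = w
    · simp only [hz, true_and, if_true]
      rw [marg, marg, Finset.sum_filter, Finset.sum_filter, Finset.sum_mul_sum]
      simp_rw [ite_mul_ite]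
    · simp [hz]
  rw [Finset.sum_filter]
  simp_rw [step]
  rw [Finset.sum_comm]
  have swap2 : ∀ ω : Ω, ∀ g : (↑(A ∪ B) → E) → Ω → ℝ,
      ∑ z : ↑(A ∪ B) → E, ∑ ω' : Ω, g z ω' = ∑ ω' : Ω, ∑ z : ↑(A ∪ B) → E, g z ω' :=
    fun _ g => Finset.sum_comm
  rw [Finset.sum_congr rfl fun ω _ => swap2 ω _]
  have rhs : marg p X (A ∩ B) w * marg p X (A ∩ B) w
      = ∑ ω : Ω, ∑ ω' : Ω,
          (if (∀ i : ↑(A ∩ B), X i ω = w i) ∧ (∀ i : ↑(A ∩ B), X i ω' = w i)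
            then p ω * p ω' else 0) := by
    rw [marg, Finset.sum_filter, Finset.sum_mul_sum]
    simp_rw [ite_mul_ite]
  rw [rhs]
  apply Finset.sum_le_sum
  intro ω _
  apply Finset.sum_le_sum
  intro ω' _
  apply inner_bound (mul_nonneg (hp0 ω) (hp0 ω'))
  · rintro z ⟨h1, h2, h3⟩
    constructor
    · intro i
      have hA : i.1 ∈ A := mem_of_mem_inter_left i.2
      have h2' := h2 ⟨i.1, hA⟩
      rw [← h1]
      exact h2'.trans (congrArg z (Subtype.ext rfl))
    · intro i
      have hB : i.1 ∈ B := mem_of_mem_inter_right i.2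
      have h3' := h3 ⟨i.1, hB⟩
      rw [← h1]
      exact h3'.trans (congrArg z (Subtype.ext rfl))
  · rintro z1 z2 ⟨_, h2, h3⟩ ⟨_, h2', h3'⟩
    funext i
    rcases Finset.mem_union.1 i.2 with hA | hB
    · have e1 := h2 ⟨i.1, hA⟩
      have e2 := h2' ⟨i.1, hA⟩
      have : z1 ⟨i.1, subset_union_left hA⟩ = z2 ⟨i.1, subset_union_left hA⟩ :=
        e1.symm.trans e2
      exact (congrArg z1 (Subtype.ext rfl) : z1 i = _).trans
        (this.trans (congrArg z2 (Subtype.ext rfl)))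
    · have e1 := h3 ⟨i.1, hB⟩
      have e2 := h3' ⟨i.1, hB⟩
      have : z1 ⟨i.1, subset_union_right hB⟩ = z2 ⟨i.1, subset_union_right hB⟩ :=
        e1.symm.trans e2
      exact (congrArg z1 (Subtype.ext rfl) : z1 i = _).trans
        (this.trans (congrArg z2 (Subtype.ext rfl)))

private lemma gibbs_pt {a b : ℝ} (ha : 0 ≤ a) (hb : 0 ≤ b) (hba : b = 0 → a = 0) :
    a * Real.log b - a * Real.log a ≤ b - a := by
  rcases eq_or_lt_of_le ha with h0 | hpos
  · simp [← h0, hb]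
  · rcases eq_or_lt_of_le hb with hb0 | hbpos
    · exact absurd (hba hb0.symm) (ne_of_gt hpos)
    · have hlog := Real.log_le_sub_one_of_pos (div_pos hbpos hpos)
      rw [Real.log_div (ne_of_gt hbpos) (ne_of_gt hpos)] at hlog
      have hc : a * (b / a) = b := mul_div_cancel₀ b (ne_of_gt hpos)
      nlinarith [hlog, hpos]

lemma ent_self (p : Ω → ℝ) (X : Fin n → Ω → E) (β : Finset (Fin n)) :
    jointEntropy p X β = -∑ z : β → E, marg p X β z * Real.log (marg p X β z) := by
  rw [jointEntropy_eq, ← Finset.sum_neg_distrib]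
  apply Finset.sum_congr rfl
  intro y _
  rw [Real.negMulLog]
  ring

lemma ent_lift {p : Ω → ℝ} {X : Fin n → Ω → E} {α β : Finset (Fin n)} (h : α ⊆ β) :
    jointEntropy p X α = -∑ z : β → E, marg p X β z * Real.log (marg p X α (res h z)) := by
  rw [ent_self, sum_lift h (fun y => Real.log (marg p X α y))]

lemma submod {p : Ω → ℝ} (hp0 : ∀ ω, 0 ≤ p ω) (hp1 : ∑ ω : Ω, p ω = 1)
    (X : Fin n → Ω → E) (A B : Finset (Fin n)) :
    jointEntropy p X (A ∪ B) + jointEntropy p X (A ∩ B)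
      ≤ jointEntropy p X A + jointEntropy p X B := by
  have hIS : (A ∩ B : Finset (Fin n)) ⊆ A ∪ B := inter_subset_left.trans subset_union_left
  have hqS0 : ∀ z : ↑(A ∪ B) → E, 0 ≤ marg p X (A ∪ B) z := fun z => marg_nonneg hp0 X _ _
  have hqA0 : ∀ z : ↑(A ∪ B) → E, 0 ≤ marg p X A (res subset_union_left z) :=
    fun z => marg_nonneg hp0 X _ _
  have hqB0 : ∀ z : ↑(A ∪ B) → E, 0 ≤ marg p X B (res subset_union_right z) :=
    fun z => marg_nonneg hp0 X _ _
  have hqI0 : ∀ z : ↑(A ∪ B) → E, 0 ≤ marg p X (A ∩ B) (res hIS z) :=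
    fun z => marg_nonneg hp0 X _ _
  have hSA : ∀ z, marg p X (A ∪ B) z ≤ marg p X A (res subset_union_left z) :=
    fun z => marg_mono hp0 subset_union_left z
  have hSB : ∀ z, marg p X (A ∪ B) z ≤ marg p X B (res subset_union_right z) :=
    fun z => marg_mono hp0 subset_union_right z
  have hSI : ∀ z, marg p X (A ∪ B) z ≤ marg p X (A ∩ B) (res hIS z) :=
    fun z => marg_mono hp0 hIS z
  set r : (↑(A ∪ B) → E) → ℝ := fun z =>
    if marg p X (A ∩ B) (res hIS z) = 0 then 0
    else marg p X A (res subset_union_left z) * marg p X B (res subset_union_right z)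
      / marg p X (A ∩ B) (res hIS z) with hr_def
  have hr0 : ∀ z, 0 ≤ r z := by
    intro z
    rw [hr_def]
    dsimp only
    split
    · exact le_refl 0
    · exact div_nonneg (mul_nonneg (hqA0 z) (hqB0 z)) (hqI0 z)
  -- pointwise log identity
  have hpt : ∀ z, marg p X (A ∪ B) z * Real.log (marg p X A (res subset_union_left z))
      + marg p X (A ∪ B) z * Real.log (marg p X B (res subset_union_right z))
      - marg p X (A ∪ B) z * Real.log (marg p X (A ∩ B) (res hIS z))
      = marg p X (A ∪ B) z * Real.log (r z) := by
    intro z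
    by_cases hz : marg p X (A ∪ B) z = 0
    · rw [hz]; ring
    · have hSpos : 0 < marg p X (A ∪ B) z := lt_of_le_of_ne (hqS0 z) (Ne.symm hz)
      have hApos : 0 < marg p X A (res subset_union_left z) := lt_of_lt_of_le hSpos (hSA z)
      have hBpos : 0 < marg p X B (res subset_union_right z) := lt_of_lt_of_le hSpos (hSB z)
      have hIpos : 0 < marg p X (A ∩ B) (res hIS z) := lt_of_lt_of_le hSpos (hSI z)
      rw [hr_def]
      dsimp only
      rw [if_neg (ne_of_gt hIpos),
        Real.log_div (ne_of_gt (mul_pos hApos hBpos)) (ne_of_gt hIpos),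
        Real.log_mul (ne_of_gt hApos) (ne_of_gt hBpos)]
      ring
  -- pointwise Gibbs
  have hgibbs : ∀ z, marg p X (A ∪ B) z * Real.log (r z)
      - marg p X (A ∪ B) z * Real.log (marg p X (A ∪ B) z) ≤ r z - marg p X (A ∪ B) z := by
    intro z
    apply gibbs_pt (hqS0 z) (hr0 z)
    intro hrz
    by_contra hq
    have hSpos : 0 < marg p X (A ∪ B) z := lt_of_le_of_ne (hqS0 z) (Ne.symm hq)
    have hApos : 0 < marg p X A (res subset_union_left z) := lt_of_lt_of_le hSpos (hSA z)
    have hBpos : 0 < marg p X B (res subset_union_right z) := lt_of_lt_of_le hSpos (hSB z)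
    have hIpos : 0 < marg p X (A ∩ B) (res hIS z) := lt_of_lt_of_le hSpos (hSI z)
    have : 0 < r z := by
      rw [hr_def]
      dsimp only
      rw [if_neg (ne_of_gt hIpos)]
      exact div_pos (mul_pos hApos hBpos) hIpos
    exact absurd hrz (ne_of_gt this)
  -- total mass of r is at most 1
  have hsumr : ∑ z : ↑(A ∪ B) → E, r z ≤ 1 := by
    rw [← Finset.sum_fiberwise univ (fun z : ↑(A ∪ B) → E => res hIS z) r]
    calc ∑ w : ↑(A ∩ B) → E,
          ∑ z ∈ univ.filter (fun z : ↑(A ∪ B) → E => res hIS z = w), r z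
        ≤ ∑ w : ↑(A ∩ B) → E, marg p X (A ∩ B) w := by
          apply Finset.sum_le_sum
          intro w _
          by_cases h0 : marg p X (A ∩ B) w = 0
          · have hz0 : ∀ z ∈ univ.filter (fun z : ↑(A ∪ B) → E => res hIS z = w), r z = 0 := by
              intro z hz
              rw [hr_def]
              dsimp only
              rw [(Finset.mem_filter.1 hz).2, if_pos h0]
            rw [Finset.sum_congr rfl hz0, Finset.sum_const, smul_zero, h0]
          · have hpos : 0 < marg p X (A ∩ B) w :=
              lt_of_le_of_ne (marg_nonneg hp0 X _ _) (Ne.symm h0)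
            have hz1 : ∀ z ∈ univ.filter (fun z : ↑(A ∪ B) → E => res hIS z = w),
                r z = marg p X A (res subset_union_left z) * marg p X B (res subset_union_right z)
                  / marg p X (A ∩ B) w := by
              intro z hz
              rw [hr_def]
              dsimp only
              rw [(Finset.mem_filter.1 hz).2, if_neg h0]
            rw [Finset.sum_congr rfl hz1, ← Finset.sum_div, div_le_iff₀ hpos]
            exact key hp0 A B w
      _ = 1 := by rw [marg_total]; exact hp1
  have hsumq : ∑ z : ↑(A ∪ B) → E, marg p X (A ∪ B) z = 1 := by
    rw [marg_total]; exact hp1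
  -- assemble
  rw [ent_self p X (A ∪ B), ent_lift (subset_union_left : A ⊆ A ∪ B),
    ent_lift (subset_union_right : B ⊆ A ∪ B), ent_lift hIS]
  have main : ∑ z : ↑(A ∪ B) → E,
      (marg p X (A ∪ B) z * Real.log (marg p X A (res subset_union_left z))
        + marg p X (A ∪ B) z * Real.log (marg p X B (res subset_union_right z))
        - marg p X (A ∪ B) z * Real.log (marg p X (A ∩ B) (res hIS z))
        - marg p X (A ∪ B) z * Real.log (marg p X (A ∪ B) z)) ≤ 0 := by
    calc ∑ z : ↑(A ∪ B) → E,
        (marg p X (A ∪ B) z * Real.log (marg p X A (res subset_union_left z))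
          + marg p X (A ∪ B) z * Real.log (marg p X B (res subset_union_right z))
            - marg p X (A ∪ B) z * Real.log (marg p X (A ∩ B) (res hIS z))
          - marg p X (A ∪ B) z * Real.log (marg p X (A ∪ B) z))
        ≤ ∑ z : ↑(A ∪ B) → E, (r z - marg p X (A ∪ B) z) := by
          apply Finset.sum_le_sum
          intro z _
          have h1 := hpt z
          have h2 := hgibbs z
          linarith
      _ = (∑ z : ↑(A ∪ B) → E, r z) - ∑ z : ↑(A ∪ B) → E, marg p X (A ∪ B) z :=
          Finset.sum_sub_distrib _ _
      _ ≤ 1 - 1 := by rw [hsumq]; linarith [hsumr]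
      _ = 0 := by ring
  rw [Finset.sum_sub_distrib, Finset.sum_sub_distrib, Finset.sum_add_distrib] at main
  linarith [main]

lemma ent_empty {p : Ω → ℝ} (hp1 : ∑ ω : Ω, p ω = 1) (X : Fin n → Ω → E) :
    jointEntropy p X (∅ : Finset (Fin n)) = 0 := by
  rw [jointEntropy_eq]
  have h1 : ∀ y : (↑(∅ : Finset (Fin n)) → E), marg p X ∅ y = 1 := by
    intro y
    rw [marg, Finset.filter_true_of_mem
      (fun ω _ => fun i => absurd i.2 (Finset.notMem_empty i.1)), hp1]
  simp_rw [h1]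
  simp [Real.negMulLog_one]

lemma han_aux {p : Ω → ℝ} (hp0 : ∀ ω, 0 ≤ p ω) (hp1 : ∑ ω : Ω, p ω = 1)
    (X : Fin n → Ω → E) (β : Finset (Fin n)) :
    ∀ γ : Finset (Fin n), γ ⊆ β →
      ∑ i ∈ γ, (jointEntropy p X β - jointEntropy p X (β.erase i)) ≤ jointEntropy p X γ := by
  intro γ
  induction γ using Finset.induction_on with
  | empty =>
    intro _
    rw [Finset.sum_empty, ent_empty hp1]
  | insert _ _ hj =>
    rename_i j γ ih
    intro hins
    have hjβ : j ∈ β := hins (Finset.mem_insert_self j γ)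
    have hγβ : γ ⊆ β := fun x hx => hins (Finset.mem_insert_of_mem hx)
    have hu : (β.erase j) ∪ insert j γ = β := by
      ext i
      simp only [Finset.mem_union, Finset.mem_erase, Finset.mem_insert]
      constructor
      · rintro (⟨_, h⟩ | h | h)
        · exact h
        · exact h ▸ hjβ
        · exact hγβ h
      · intro hiβ
        by_cases hij : i = j
        · exact Or.inr (Or.inl hij)
        · exact Or.inl ⟨hij, hiβ⟩
    have hi : (β.erase j) ∩ insert j γ = γ := by
      ext i
      simp only [Finset.mem_inter, Finset.mem_erase, Finset.mem_insert]
      constructor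
      · rintro ⟨⟨hne, _⟩, (rfl | h)⟩
        · exact absurd rfl hne
        · exact h
      · intro hiγ
        exact ⟨⟨fun e => hj (e ▸ hiγ), hγβ hiγ⟩, Or.inr hiγ⟩
    have hsub := submod hp0 hp1 X (β.erase j) (insert j γ)
    rw [hu, hi] at hsub
    rw [Finset.sum_insert hj]
    have := ih hγβ
    linarith

lemma han {p : Ω → ℝ} (hp0 : ∀ ω, 0 ≤ p ω) (hp1 : ∑ ω : Ω, p ω = 1)
    (X : Fin n → Ω → E) (β : Finset (Fin n)) (m : ℕ) (hc : β.card = m + 1) :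
    (m : ℝ) * jointEntropy p X β ≤ ∑ i ∈ β, jointEntropy p X (β.erase i) := by
  have h1 := han_aux hp0 hp1 X β β (Finset.Subset.refl β)
  rw [Finset.sum_sub_distrib, Finset.sum_const, hc, nsmul_eq_mul] at h1
  push_cast at h1
  linarith

lemma double_count (f : Finset (Fin n) → ℝ) (m : ℕ) :
    ∑ β ∈ powersetCard (m + 1) (univ : Finset (Fin n)), ∑ i ∈ β, f (β.erase i)
    = ∑ α ∈ powersetCard m (univ : Finset (Fin n)), ((n - m : ℕ) : ℝ) * f α := by
  have hstep : ∀ α ∈ powersetCard m (univ : Finset (Fin n)),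
      ((n - m : ℕ) : ℝ) * f α = ∑ _i ∈ αᶜ, f α := by
    intro α hα
    rw [Finset.sum_const, nsmul_eq_mul]
    congr 2
    rw [Finset.card_compl, (Finset.mem_powersetCard.1 hα).2, Fintype.card_fin]
  rw [Finset.sum_congr rfl hstep]
  rw [Finset.sum_sigma' (powersetCard (m + 1) (univ : Finset (Fin n))) (fun β => β)
    (fun β i => f (β.erase i)),
    Finset.sum_sigma' (powersetCard m (univ : Finset (Fin n))) (fun α => αᶜ)
    (fun α _i => f α)]
  apply Finset.sum_nbij' (i := fun x => (⟨x.1.erase x.2, x.2⟩ : Σ _ : Finset (Fin n), Fin n))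
    (j := fun x => (⟨insert x.2 x.1, x.2⟩ : Σ _ : Finset (Fin n), Fin n))
  · rintro ⟨β, i⟩ hx
    rw [Finset.mem_sigma] at hx
    obtain ⟨hβ, hi⟩ := hx
    have hcβ := (Finset.mem_powersetCard.1 hβ).2
    rw [Finset.mem_sigma]
    constructor
    · rw [Finset.mem_powersetCard]
      refine ⟨Finset.subset_univ _, ?_⟩
      rw [Finset.card_erase_of_mem hi, hcβ]
      omega
    · rw [Finset.mem_compl]
      exact Finset.notMem_erase i β
  · rintro ⟨α, i⟩ hx
    rw [Finset.mem_sigma] at hx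
    obtain ⟨hα, hi⟩ := hx
    have hcα := (Finset.mem_powersetCard.1 hα).2
    rw [Finset.mem_compl] at hi
    rw [Finset.mem_sigma]
    constructor
    · rw [Finset.mem_powersetCard]
      refine ⟨Finset.subset_univ _, ?_⟩
      rw [Finset.card_insert_of_notMem hi, hcα]
    · exact Finset.mem_insert_self i α
  · rintro ⟨β, i⟩ hx
    rw [Finset.mem_sigma] at hx
    have : insert i (β.erase i) = β := Finset.insert_erase hx.2
    simp only [Sigma.mk.inj_iff]
    exact ⟨this, HEq.rfl⟩
  · rintro ⟨α, i⟩ hx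
    rw [Finset.mem_sigma] at hx
    have hi : i ∉ α := Finset.mem_compl.1 hx.2
    have : (insert i α).erase i = α := Finset.erase_insert hi
    simp only [Sigma.mk.inj_iff]
    exact ⟨this, HEq.rfl⟩
  · rintro ⟨β, i⟩ _
    rfl

end AvgEnt

open AvgEnt in
/-- For any discrete random vector, the normalized average entropies `h_m / m`
are nonincreasing in `m`: `h_{m+1}/(m+1) ≤ h_m/m` for `1 ≤ m ≤ n - 1`. -/
theorem average_entropy_slope_nonincreasing (n : ℕ) (Ω E : Type)
    [Fintype Ω] [Fintype E] [DecidableEq E]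
    (p : Ω → ℝ) (hp0 : ∀ ω, 0 ≤ p ω) (hp1 : ∑ ω, p ω = 1)
    (X : Fin n → Ω → E) (h : ℕ → ℝ)
    (hdef : ∀ m, 1 ≤ m → m ≤ n → h m = ((n.choose m : ℝ))⁻¹ *
      ∑ α ∈ powersetCard m (univ : Finset (Fin n)), jointEntropy p X α) :
    ∀ m, 1 ≤ m → m ≤ n - 1 → h (m + 1) / (m + 1) ≤ h m / m := by
  intro m hm1 hmn
  have hm1n : m + 1 ≤ n := by omega
  have hmn' : m ≤ n := by omega
  rw [hdef m hm1 hmn', hdef (m + 1) (by omega) hm1n]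
  set Sm := ∑ α ∈ powersetCard m (univ : Finset (Fin n)), jointEntropy p X α with hSm
  set Sm1 := ∑ α ∈ powersetCard (m + 1) (univ : Finset (Fin n)), jointEntropy p X α with hSm1
  have hkey : (m : ℝ) * Sm1 ≤ ((n - m : ℕ) : ℝ) * Sm := by
    rw [hSm1, hSm, Finset.mul_sum, Finset.mul_sum]
    calc ∑ β ∈ powersetCard (m + 1) (univ : Finset (Fin n)), (m : ℝ) * jointEntropy p X β
        ≤ ∑ β ∈ powersetCard (m + 1) (univ : Finset (Fin n)),
            ∑ i ∈ β, jointEntropy p X (β.erase i) := by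
          apply Finset.sum_le_sum
          intro β hβ
          exact han hp0 hp1 X β m (Finset.mem_powersetCard.1 hβ).2
      _ = ∑ α ∈ powersetCard m (univ : Finset (Fin n)),
            ((n - m : ℕ) : ℝ) * jointEntropy p X α := double_count _ m
  have hCm : (0 : ℝ) < (n.choose m : ℝ) := by exact_mod_cast Nat.choose_pos hmn'
  have hCm1 : (0 : ℝ) < (n.choose (m + 1) : ℝ) := by exact_mod_cast Nat.choose_pos hm1n
  have hmpos : (0 : ℝ) < (m : ℝ) := by exact_mod_cast hm1
  have hch : (n.choose (m + 1) : ℝ) * ((m : ℝ) + 1)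
      = (n.choose m : ℝ) * ((n - m : ℕ) : ℝ) := by exact_mod_cast Nat.choose_succ_right_eq n m
  push_cast
  rw [inv_mul_eq_div, inv_mul_eq_div, div_div, div_div,
    div_le_div_iff₀ (by positivity) (by positivity)]
  have step1 : (m : ℝ) * Sm1 * (n.choose m : ℝ) ≤ ((n - m : ℕ) : ℝ) * Sm * (n.choose m : ℝ) :=
    mul_le_mul_of_nonneg_right hkey hCm.le
  have e2 : Sm * ((n.choose (m + 1) : ℝ) * ((m : ℝ) + 1))
      = ((n - m : ℕ) : ℝ) * Sm * (n.choose m : ℝ) := by rw [hch]; ring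
  nlinarith [step1, e2]
end

section
/- The submodularity of joint entropy averaged over subsets: for any discrete random vector X and any 1 ≤ m ≤ n−1, the averages satisfy h_{m+1} − h_m ≤ h_m − h_{m-1}, where h_m is the average size-m joint entropy and h_0 = 0. -/
open Finset Real

/-!
Entropy is submodular, `H(α ∪ β) + H(α ∩ β) ≤ H(α) + H(β)`: with `P` the law of `X_{α ∪ β}`,
the bound `log x ≥ 1 - 1/x` applied pointwise to `P P_{α ∩ β} / (P_α P_β)` reduces it to the fact
that the conditionally independent coupling `P_α P_β / P_{α ∩ β}` has total mass at most one.
Summing submodularity over all pairs `s ∪ {i}, s ∪ {j}` with `|s| = m - 1` and `i ≠ j ∉ s`, and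
counting how often each set occurs, gives `m (n - m) C(n, m) (h_{m+1} - 2 h_m + h_{m-1}) ≤ 0`.
-/

lemma sub_mul_div_le_mul_log {f a b c : ℝ} (hf : 0 ≤ f) (ha : f ≤ a) (hb : f ≤ b) (hc : f ≤ c) :
    f - a * b / c ≤ f * (log f + log c - log a - log b) := by
  rcases hf.eq_or_lt with rfl | hf
  · have : 0 ≤ a * b / c := by positivity
    simp only [zero_mul]
    linarith
  have ha := hf.trans_le ha
  have hb := hf.trans_le hb
  have hc := hf.trans_le hc
  have hlog := one_sub_inv_le_log_of_pos (show 0 < f * c / (a * b) by positivity)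
  rw [log_div (by positivity) (by positivity), log_mul hf.ne' hc.ne', log_mul ha.ne' hb.ne']
    at hlog
  calc f - a * b / c = f * (1 - (f * c / (a * b))⁻¹) := by field_simp
    _ ≤ f * (log f + log c - log a - log b) := by
        rw [sub_sub]
        exact mul_le_mul_of_nonneg_left hlog hf.le

namespace FiniteProbability

variable {Ω : Type*} [Fintype Ω]

noncomputable def law {Y : Type*} [DecidableEq Y] (p : Ω → ℝ) (V : Ω → Y) (y : Y) : ℝ :=
  ∑ ω with V ω = y, p ω

noncomputable def entropy {Y : Type*} [Fintype Y] [DecidableEq Y] (p : Ω → ℝ) (V : Ω → Y) :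
    ℝ :=
  ∑ y, negMulLog (law p V y)

variable {Y Z : Type*} [DecidableEq Y] [Fintype Z] {p : Ω → ℝ}

lemma law_nonneg (hp : ∀ ω, 0 ≤ p ω) (V : Ω → Y) (y : Y) : 0 ≤ law p V y :=
  sum_nonneg fun ω _ => hp ω

lemma sum_law [Fintype Y] (V : Ω → Y) : ∑ y, law p V y = ∑ ω, p ω :=
  sum_fiberwise univ V p

lemma entropy_eq_zero_of_subsingleton [Fintype Y] [Subsingleton Y] (hp : ∑ ω, p ω = 1)
    (V : Ω → Y) : entropy p V = 0 := by
  refine sum_eq_zero fun y _ => ?_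
  rw [law, filter_true_of_mem fun ω _ => Subsingleton.elim _ _, hp, negMulLog_one]

section Pushforward

variable [DecidableEq Z]

lemma sum_law_fiber (V : Ω → Z) (g : Z → Y) (y : Y) :
    ∑ z with g z = y, law p V z = law p (g ∘ V) y := by
  rw [law, ← sum_fiberwise_of_maps_to (g := V) (t := {z | g z = y}) (by simp)]
  refine sum_congr rfl fun z hz => sum_congr ?_ fun _ _ => rfl
  ext ω
  simp only [mem_filter, mem_univ, true_and, Function.comp_apply] at hz ⊢
  constructor
  · rintro rfl
    exact ⟨hz, rfl⟩
  · exact And.right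

lemma law_le_law_comp (hp : ∀ ω, 0 ≤ p ω) (V : Ω → Z) (g : Z → Y) (z : Z) :
    law p V z ≤ law p (g ∘ V) (g z) := by
  rw [← sum_law_fiber]
  exact single_le_sum (fun z _ => law_nonneg hp V z) (by simp)

lemma entropy_comp [Fintype Y] (V : Ω → Z) (g : Z → Y) :
    entropy p (g ∘ V) = ∑ z, law p V z * -log (law p (g ∘ V) (g z)) := by
  rw [entropy, ← sum_fiberwise univ g]
  refine sum_congr rfl fun y _ => ?_
  rw [negMulLog, neg_mul, ← mul_neg]
  nth_rw 1 [← sum_law_fiber]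
  rw [sum_mul]
  refine sum_congr rfl fun z hz => ?_
  rw [(mem_filter.1 hz).2]

end Pushforward

variable {A B C : Type*} [Fintype A] [DecidableEq A] [Fintype B] [DecidableEq B] [DecidableEq C]

lemma sum_law_mul_law_div_le (hp : ∀ ω, 0 ≤ p ω) (V : Ω → Z) (f : Z → A) (g : Z → B)
    (hfg : Function.Injective fun z => (f z, g z)) (r : A → C) (s : B → C)
    (hrs : r ∘ f = s ∘ g) :
    ∑ z, law p (f ∘ V) (f z) * law p (g ∘ V) (g z) / law p (r ∘ f ∘ V) (r (f z)) ≤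
      ∑ ω, p ω := by
  set F : A × B → ℝ := fun q =>
    law p (f ∘ V) q.1 * law p (g ∘ V) q.2 / law p (r ∘ f ∘ V) (r q.1)
  have hF : ∀ q, 0 ≤ F q := fun q => by
    have := law_nonneg hp (f ∘ V) q.1
    have := law_nonneg hp (g ∘ V) q.2
    have := law_nonneg hp (r ∘ f ∘ V) (r q.1)
    positivity
  have hlaw : law p (r ∘ f ∘ V) = law p (s ∘ g ∘ V) := by
    rw [← Function.comp_assoc, hrs, Function.comp_assoc]
  calc ∑ z, F (f z, g z) = ∑ q ∈ univ.image fun z => (f z, g z), F q :=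
        (sum_image fun _ _ _ _ h => hfg h).symm
    _ ≤ ∑ q with s q.2 = r q.1, F q := by
        refine sum_le_sum_of_subset_of_nonneg (fun q hq => ?_) fun q _ _ => hF q
        obtain ⟨z, -, rfl⟩ := mem_image.1 hq
        simpa using (congrFun hrs z).symm
    _ = ∑ x, law p (f ∘ V) x / law p (r ∘ f ∘ V) (r x) *
          ∑ y with s y = r x, law p (g ∘ V) y := by
        rw [sum_filter, Fintype.sum_prod_type]
        refine sum_congr rfl fun x _ => ?_
        rw [mul_sum, sum_filter]
        exact sum_congr rfl fun y _ => if_congr Iff.rfl (div_mul_eq_mul_div _ _ _).symm rfl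
    _ = ∑ x, law p (f ∘ V) x / law p (r ∘ f ∘ V) (r x) * law p (r ∘ f ∘ V) (r x) := by
        simp_rw [sum_law_fiber, hlaw]
    _ ≤ ∑ x, law p (f ∘ V) x := by
        refine sum_le_sum fun x _ => ?_
        rcases eq_or_ne (law p (r ∘ f ∘ V) (r x)) 0 with h | h
        · simpa [h] using law_nonneg hp _ x
        · rw [div_mul_cancel₀ _ h]
    _ = ∑ ω, p ω := sum_law _

theorem entropy_add_entropy_le [DecidableEq Z] [Fintype C] (hp : ∀ ω, 0 ≤ p ω) (V : Ω → Z)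
    (f : Z → A) (g : Z → B) (hfg : Function.Injective fun z => (f z, g z)) (r : A → C)
    (s : B → C) (hrs : r ∘ f = s ∘ g) :
    entropy p V + entropy p (r ∘ f ∘ V) ≤ entropy p (f ∘ V) + entropy p (g ∘ V) := by
  have hgibbs := sum_le_sum fun z (_ : z ∈ univ) =>
    sub_mul_div_le_mul_log (law_nonneg hp V z) (law_le_law_comp hp V f z)
      (law_le_law_comp hp V g z) (law_le_law_comp hp V (r ∘ f) z)
  rw [sum_sub_distrib, sum_law] at hgibbs
  have hcoupling := sum_law_mul_law_div_le hp V f g hfg r s hrs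
  have hV : entropy p V = ∑ z, law p V z * -log (law p V z) := by
    simpa using entropy_comp V id
  rw [hV, entropy_comp V f, entropy_comp V g, ← Function.comp_assoc, entropy_comp V (r ∘ f)]
  simp only [mul_add, mul_sub, mul_neg, sum_add_distrib, sum_sub_distrib, sum_neg_distrib,
    Function.comp_apply, Function.comp_assoc] at hgibbs ⊢
  linarith

end FiniteProbability

lemma Finset.injective_restrict₂_union {ι : Type*} [DecidableEq ι] {M : ι → Type*}
    (s t : Finset ι) :
    Function.Injective fun z : (i : ↥(s ∪ t)) → M i =>
      (restrict₂ (subset_union_left : s ⊆ s ∪ t) z,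
        restrict₂ (subset_union_right : t ⊆ s ∪ t) z) := by
  intro z z' h
  funext ⟨i, hi⟩
  rcases mem_union.1 hi with hi | hi
  · exact congrFun (Prod.ext_iff.1 h).1 ⟨i, hi⟩
  · exact congrFun (Prod.ext_iff.1 h).2 ⟨i, hi⟩

section JointEntropy

open FiniteProbability

variable {Ω E : Type*} [Fintype Ω] [Fintype E] [DecidableEq E] {n : ℕ} {p : Ω → ℝ}
  (X : Fin n → Ω → E)

lemma jointEntropy_eq_entropy (α : Finset (Fin n)) :
    jointEntropy p X α = entropy p (α.restrict ∘ Function.swap X) := by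
  simp [jointEntropy, entropy, law, funext_iff]

theorem jointEntropy_union_add_inter_le (hp : ∀ ω, 0 ≤ p ω) (α β : Finset (Fin n)) :
    jointEntropy p X (α ∪ β) + jointEntropy p X (α ∩ β) ≤
      jointEntropy p X α + jointEntropy p X β := by
  have := entropy_add_entropy_le hp ((α ∪ β).restrict ∘ Function.swap X) _ _
    (injective_restrict₂_union (M := fun _ => E) α β)
    (@restrict₂ _ (fun _ => E) _ _ inter_subset_left)
    (@restrict₂ _ (fun _ => E) _ _ inter_subset_right) rfl
  simp only [← Function.comp_assoc, restrict₂_comp_restrict] at this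
  simpa only [jointEntropy_eq_entropy] using this

lemma jointEntropy_empty (hp : ∑ ω, p ω = 1) : jointEntropy p X ∅ = 0 := by
  rw [jointEntropy_eq_entropy, entropy_eq_zero_of_subsingleton hp]

end JointEntropy

lemma Finset.sum_sum_erase_comm {ι M : Type*} [DecidableEq ι] [AddCommMonoid M] (s : Finset ι)
    (F : ι → ι → M) :
    ∑ i ∈ s, ∑ j ∈ s.erase i, F i j = ∑ i ∈ s, ∑ j ∈ s.erase i, F j i :=
  sum_comm' fun i j => by simp only [mem_erase]; tauto

section LevelAverage

variable {ι : Type*} [Fintype ι] [DecidableEq ι]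

noncomputable def levelAverage (f : Finset ι → ℝ) (k : ℕ) : ℝ :=
  ((Fintype.card ι).choose k : ℝ)⁻¹ * ∑ s ∈ powersetCard k univ, f s

lemma sum_powersetCard_sum_compl_insert_s14 {M : Type*} [AddCommMonoid M] (g : Finset ι → M)
    (k : ℕ) :
    ∑ s ∈ powersetCard k univ, ∑ i ∈ sᶜ, g (insert i s) =
      (k + 1) • ∑ t ∈ powersetCard (k + 1) univ, g t := by
  calc ∑ s ∈ powersetCard k univ, ∑ i ∈ sᶜ, g (insert i s)
      = ∑ t ∈ powersetCard (k + 1) univ, ∑ _i ∈ t, g t := by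
        rw [sum_sigma', sum_sigma']
        refine sum_nbij' (fun x => ⟨insert x.2 x.1, x.2⟩) (fun x => ⟨x.1.erase x.2, x.2⟩)
          ?_ ?_ ?_ ?_ fun _ _ => rfl
        all_goals
          rintro ⟨s, i⟩ h
          simp_all [mem_sigma, card_erase_of_mem]
    _ = (k + 1) • ∑ t ∈ powersetCard (k + 1) univ, g t := by
        rw [smul_sum]
        refine sum_congr rfl fun t ht => ?_
        rw [sum_const, (mem_powersetCard_univ.1 ht)]

lemma sum_compl_pairs_le_of_submodular {f : Finset ι → ℝ}
    (hf : ∀ s t, f (s ∪ t) + f (s ∩ t) ≤ f s + f t) (s : Finset ι) :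
    ∑ i ∈ sᶜ, ∑ j ∈ (insert i s)ᶜ, f (insert j (insert i s)) + #sᶜ * (#sᶜ - 1) * f s ≤
      2 * (#sᶜ - 1) * ∑ i ∈ sᶜ, f (insert i s) := by
  have hpair : ∀ i ∈ sᶜ, ∀ j ∈ sᶜ.erase i,
      f (insert j (insert i s)) + f s ≤ f (insert i s) + f (insert j s) := by
    intro i hi j hj
    have hji := (mem_erase.1 hj).1
    convert hf (insert i s) (insert j s) using 3
    · ext; simp only [mem_insert, mem_union]; tauto
    · have := mem_compl.1 hi
      have := mem_compl.1 (mem_of_mem_erase hj)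
      ext x; simp only [mem_insert, mem_inter]
      grind
  have hconst : ∀ i ∈ sᶜ, ∀ c : ℝ, ∑ _j ∈ sᶜ.erase i, c = (#sᶜ - 1) * c := fun i hi c => by
    rw [sum_const, nsmul_eq_mul, cast_card_erase_of_mem hi]
  calc ∑ i ∈ sᶜ, ∑ j ∈ (insert i s)ᶜ, f (insert j (insert i s)) + #sᶜ * (#sᶜ - 1) * f s
      = ∑ i ∈ sᶜ, ∑ j ∈ sᶜ.erase i, (f (insert j (insert i s)) + f s) := by
        simp only [compl_insert, sum_add_distrib]
        rw [sum_congr rfl fun i hi => hconst i hi (f s), sum_const, nsmul_eq_mul]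
        ring
    _ ≤ ∑ i ∈ sᶜ, ∑ j ∈ sᶜ.erase i, (f (insert i s) + f (insert j s)) :=
        sum_le_sum fun i hi => sum_le_sum fun j hj => hpair i hi j hj
    _ = 2 * (#sᶜ - 1) * ∑ i ∈ sᶜ, f (insert i s) := by
        simp only [sum_add_distrib]
        rw [sum_sum_erase_comm sᶜ fun i j => f (insert j s),
          sum_congr rfl fun i hi => hconst i hi (f (insert i s)), ← mul_sum]
        ring

lemma sum_powersetCard_add_two_le_of_submodular {f : Finset ι → ℝ}
    (hf : ∀ s t, f (s ∪ t) + f (s ∩ t) ≤ f s + f t) {k r : ℕ}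
    (hN : Fintype.card ι = k + 2 + r) :
    (k + 1) * (k + 2) * ∑ s ∈ powersetCard (k + 2) univ, f s +
        (r + 2) * (r + 1) * ∑ s ∈ powersetCard k univ, f s ≤
      2 * (r + 1) * ((k + 1) * ∑ s ∈ powersetCard (k + 1) univ, f s) := by
  have hcompl : ∀ s ∈ powersetCard k (univ : Finset ι), (#sᶜ : ℝ) = r + 2 := fun s hs => by
    rw [card_compl, mem_powersetCard_univ.1 hs, hN, show k + 2 + r - k = r + 2 by omega]
    push_cast; ring
  have htwo : ∑ s ∈ powersetCard k univ, ∑ i ∈ sᶜ, ∑ j ∈ (insert i s)ᶜ,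
      f (insert j (insert i s)) = (k + 1) * (k + 2) * ∑ s ∈ powersetCard (k + 2) univ, f s := by
    rw [sum_powersetCard_sum_compl_insert_s14 (fun t => ∑ j ∈ tᶜ, f (insert j t)),
      sum_powersetCard_sum_compl_insert_s14, smul_smul, nsmul_eq_mul]
    push_cast; ring
  have hone := sum_powersetCard_sum_compl_insert_s14 f k
  rw [nsmul_eq_mul] at hone
  have hpairs : ∀ s ∈ powersetCard k (univ : Finset ι),
      ∑ i ∈ sᶜ, ∑ j ∈ (insert i s)ᶜ, f (insert j (insert i s)) + (r + 2) * (r + 1) * f s ≤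
        2 * (r + 1) * ∑ i ∈ sᶜ, f (insert i s) := fun s hs => by
    have := sum_compl_pairs_le_of_submodular hf s
    rwa [hcompl s hs, add_sub_assoc, show (2 : ℝ) - 1 = 1 by norm_num] at this
  have := sum_le_sum hpairs
  rw [sum_add_distrib, htwo, ← mul_sum, ← mul_sum, hone] at this
  push_cast at this
  linarith

theorem levelAverage_add_two_sub_le_of_submodular {f : Finset ι → ℝ}
    (hf : ∀ s t, f (s ∪ t) + f (s ∩ t) ≤ f s + f t) {k : ℕ} (hk : k + 2 ≤ Fintype.card ι) :
    levelAverage f (k + 2) - levelAverage f (k + 1) ≤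
      levelAverage f (k + 1) - levelAverage f k := by
  obtain ⟨r, hN⟩ : ∃ r, Fintype.card ι = k + 2 + r := ⟨_, (Nat.add_sub_cancel' hk).symm⟩
  have hsum : ∀ j ≤ Fintype.card ι, ∑ s ∈ powersetCard j univ, f s =
      (Fintype.card ι).choose j * levelAverage f j := fun j hj =>
    (mul_inv_cancel_left₀ (by exact_mod_cast (Nat.choose_pos hj).ne') _).symm
  have hmaster := sum_powersetCard_add_two_le_of_submodular hf hN
  rw [hsum _ hk, hsum (k + 1) (by omega), hsum k (by omega)] at hmaster
  have e₂ : ((Fintype.card ι).choose (k + 2) : ℝ) * (k + 2) =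
      (Fintype.card ι).choose (k + 1) * (r + 1) := by
    have := Nat.choose_succ_right_eq (Fintype.card ι) (k + 1)
    rw [hN, show k + 2 + r - (k + 1) = r + 1 by omega] at this
    rw [hN]; exact_mod_cast this
  have e₁ : ((Fintype.card ι).choose (k + 1) : ℝ) * (k + 1) =
      (Fintype.card ι).choose k * (r + 2) := by
    have := Nat.choose_succ_right_eq (Fintype.card ι) k
    rw [hN, show k + 2 + r - k = r + 2 by omega] at this
    rw [hN]; exact_mod_cast this
  have hpos : (0 : ℝ) < (k + 1) * (r + 1) * (Fintype.card ι).choose (k + 1) := by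
    have := Nat.choose_pos (show k + 1 ≤ Fintype.card ι by omega)
    positivity
  have : (k + 1) * (r + 1) * (Fintype.card ι).choose (k + 1) *
      (levelAverage f (k + 2) - levelAverage f (k + 1) -
        (levelAverage f (k + 1) - levelAverage f k)) ≤ 0 := by
    linear_combination hmaster - (k + 1) * levelAverage f (k + 2) * e₂ +
      (r + 1) * levelAverage f k * e₁
  linarith [nonpos_of_mul_nonpos_right this hpos]

end LevelAverage

/-- Averaged submodularity of joint entropy: for any discrete random vector and
`1 ≤ m ≤ n - 1`, the increments of the average entropy function are
nonincreasing: `h_{m+1} - h_m ≤ h_m - h_{m-1}` (with `h_0 = 0`). -/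
theorem average_entropy_increments_nonincreasing (n : ℕ) (Ω E : Type)
    [Fintype Ω] [Fintype E] [DecidableEq E]
    (p : Ω → ℝ) (hp0 : ∀ ω, 0 ≤ p ω) (hp1 : ∑ ω, p ω = 1)
    (X : Fin n → Ω → E) (h : ℕ → ℝ)
    (hdef : ∀ m, 1 ≤ m → m ≤ n → h m = ((n.choose m : ℝ))⁻¹ *
      ∑ α ∈ powersetCard m (univ : Finset (Fin n)), jointEntropy p X α)
    (h0 : h 0 = 0) :
    ∀ m, 1 ≤ m → m ≤ n - 1 → h (m + 1) - h m ≤ h m - h (m - 1) := by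
  intro m hm1 hmn
  obtain ⟨k, rfl⟩ : ∃ k, m = k + 1 := ⟨m - 1, by omega⟩
  have hlevel : ∀ j ≤ n, h j = levelAverage (jointEntropy p X) j := by
    rintro (_ | j) hj
    · simp [levelAverage, h0, jointEntropy_empty X hp1]
    · simpa [levelAverage] using hdef (j + 1) (by omega) hj
  rw [Nat.add_sub_cancel, hlevel _ (by omega), hlevel _ (by omega), hlevel _ (by omega)]
  exact levelAverage_add_two_sub_le_of_submodular (jointEntropy_union_add_inter_le X hp0)
    (by simp; omega)
end
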